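/- arXiv:2309.01747 — 4 statements merged into one kernel-verified Lean document; each statement's English description precedes it below -/
import Mathlib

section
/- Fix λ_1 ≥ λ_2 ≥ ... ≥ λ_n ≥ 0 and a permutation w ∈ S_{n-1} with associated vector (r_1, ..., r_{n-1}). The face GZ(λ, w) of the Gelfand-Zetlin polytope GZ(λ), cut out by the equations x_{i,i+j} = x_{i,i+j-1} for i ∈ [1, r_j - 1] and x_{i,i+j} = x_{i+1,i+j} for i ∈ [r_j + 1, n - j] (for all j ∈ [1, n-1]), has dimension n - 1 whenever λ_1 > λ_2 > ... > λ_n. -/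
/-- Index type for the strictly-upper-triangular entries `x_{k,ℓ}`, `1 ≤ k < ℓ ≤ n`. -/
abbrev GZIdx (n : ℕ) := {p : Fin n × Fin n // p.1 < p.2}

/-- The entry `x_{i,j}` (1-based indices), with the convention `x_{i,i} = λ_i`,
and junk value `0` outside the triangular range. -/
def GZX {n : ℕ} (lam : Fin n → ℝ) (x : GZIdx n → ℝ) (i j : ℕ) : ℝ :=
  if h : 1 ≤ i ∧ i ≤ j ∧ j ≤ n then
    if hij : i < j then
      x ⟨(⟨i - 1, by omega⟩, ⟨j - 1, by omega⟩), Fin.mk_lt_mk.mpr (by omega)⟩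
    else lam ⟨i - 1, by omega⟩
  else 0

/-- The Gelfand-Zetlin polytope `GZ(λ)`: in every configuration
`a = x_{i,j}`, `b = x_{i,j+1}`, `c = x_{i+1,j+1}` one has `a ≥ b ≥ c`. -/
def GZpoly {n : ℕ} (lam : Fin n → ℝ) : Set (GZIdx n → ℝ) :=
  {x | ∀ i j : ℕ, 1 ≤ i → i ≤ j → j + 1 ≤ n →
    GZX lam x i (j + 1) ≤ GZX lam x i j ∧
    GZX lam x (i + 1) (j + 1) ≤ GZX lam x i (j + 1)}

/-- `rvecL w j`: the rank of `w⁻¹ j` counted from the largest among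
`w⁻¹ j, ..., w⁻¹ (m-1)` (0-based indexing). -/
def rvecL {m : ℕ} (w : Equiv.Perm (Fin m)) (j : Fin m) : ℕ :=
  (Finset.univ.filter (fun k : Fin m => j ≤ k ∧ w⁻¹ j ≤ w⁻¹ k)).card

/-- 1-based version of `rvecL`. -/
def rv {m : ℕ} (w : Equiv.Perm (Fin m)) (j : ℕ) : ℕ :=
  if h : 1 ≤ j ∧ j ≤ m then rvecL w ⟨j - 1, by omega⟩ else 0

/-- The face `GZ(λ, w)` of the Gelfand-Zetlin polytope attached to `w ∈ S_{n-1}`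
(`n = m + 1`), cut out by `x_{i,i+j} = x_{i,i+j-1}` for `i ∈ [1, r_j - 1]` and
`x_{i,i+j} = x_{i+1,i+j}` for `i ∈ [r_j + 1, n - j]`. -/
def GZface {m : ℕ} (lam : Fin (m + 1) → ℝ) (w : Equiv.Perm (Fin m)) :
    Set (GZIdx (m + 1) → ℝ) :=
  {x | x ∈ GZpoly lam ∧ ∀ j, 1 ≤ j → j ≤ m → ∀ i,
    (1 ≤ i → i + 1 ≤ rv w j → GZX lam x i (i + j) = GZX lam x i (i + j - 1)) ∧
    (rv w j + 1 ≤ i → i ≤ m + 1 - j → GZX lam x i (i + j) = GZX lam x (i + 1) (i + j))}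


/-! A point of `GZ(λ, w)` is determined by its `m` free entries `x_{r_j, r_j + j}`: on the
`j`-th diagonal the equations make every entry above position `r_j` equal to its left neighbour
and every entry below it equal to its lower neighbour, so each entry is either some `λ_i` or one
of the free entries. Hence the face lies in a translate of the span of `m` indicator vectors
with disjoint supports. Conversely, when `λ` is strictly decreasing, choosing the free entries
diagonal by diagonal strictly between their two neighbours makes all the remaining inequalities
strict, so each free entry can be perturbed separately inside the face. -/

namespace GZ

variable {m : ℕ}

lemma one_le_rv (w : Equiv.Perm (Fin m)) {j : ℕ} (h1 : 1 ≤ j) (h2 : j ≤ m) :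
    1 ≤ rv w j := by
  rw [rv, dif_pos ⟨h1, h2⟩]
  exact Finset.card_pos.mpr ⟨⟨j - 1, by omega⟩, by simp⟩

lemma rv_le (w : Equiv.Perm (Fin m)) {j : ℕ} (h1 : 1 ≤ j) (h2 : j ≤ m) :
    rv w j ≤ m + 1 - j := by
  rw [rv, dif_pos ⟨h1, h2⟩, rvecL]
  have := Finset.card_le_card (t := Finset.Ici (⟨j - 1, by omega⟩ : Fin m))
    (s := Finset.univ.filter fun k =>
      (⟨j - 1, by omega⟩ : Fin m) ≤ k ∧ w⁻¹ ⟨j - 1, by omega⟩ ≤ w⁻¹ k)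
    fun k hk => Finset.mem_Ici.mpr (Finset.mem_filter.mp hk).2.1
  rw [Fin.card_Ici, Fin.val_mk] at this
  omega

variable (lam : Fin (m + 1) → ℝ) (w : Equiv.Perm (Fin m))

/-- The entry `x_{i,i+g}` of the point of `GZ(λ, w)` whose free entries are
`x_{r_j, r_j + j} = t j`: on the diagonal `j = g + 1`, the entries above position `r_j` copy
their left neighbour and those below it copy their lower neighbour. -/
def faceEntry (t : ℕ → ℝ) : ℕ → ℕ → ℝ
  | i, 0 => if h : 1 ≤ i ∧ i ≤ m + 1 then lam ⟨i - 1, by omega⟩ else 0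
  | i, g + 1 =>
    if i < rv w (g + 1) then faceEntry t i g
    else if i = rv w (g + 1) then t (g + 1)
    else faceEntry t (i + 1) g

/-- The index of the parameter copied into `faceEntry lam w t i g`, or `0` for an entry of `λ`. -/
def faceSource : ℕ → ℕ → ℕ
  | _, 0 => 0
  | i, g + 1 =>
    if i < rv w (g + 1) then faceSource i g
    else if i = rv w (g + 1) then g + 1
    else faceSource (i + 1) g

lemma faceEntry_sub_faceEntry (t s : ℕ → ℝ) (i g : ℕ) :
    faceEntry lam w t i g - faceEntry lam w s i g =
      if faceSource w i g = 0 then 0 else t (faceSource w i g) - s (faceSource w i g) := by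
  induction g generalizing i with
  | zero => simp [faceEntry, faceSource]
  | succ g ih =>
    rw [faceEntry, faceEntry, faceSource]
    split_ifs <;> simp_all

lemma faceSource_le (i g : ℕ) : faceSource w i g ≤ g := by
  induction g generalizing i with
  | zero => simp [faceSource]
  | succ g ih =>
    rw [faceSource]
    split_ifs
    · exact (ih i).trans g.le_succ
    · rfl
    · exact (ih (i + 1)).trans g.le_succ

lemma continuous_faceEntry (i g : ℕ) : Continuous fun t => faceEntry lam w t i g := by
  induction g generalizing i with
  | zero => exact continuous_const
  | succ g ih =>
    simp only [faceEntry]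
    split_ifs
    · exact ih i
    · exact continuous_apply _
    · exact ih (i + 1)

lemma faceEntry_congr {s t : ℕ → ℝ} {g : ℕ} (h : ∀ j, 1 ≤ j → j ≤ g → t j = s j)
    (i : ℕ) : faceEntry lam w t i g = faceEntry lam w s i g := by
  induction g generalizing i with
  | zero => rfl
  | succ g ih =>
    have h' : ∀ j, 1 ≤ j → j ≤ g → t j = s j := fun j h1 h2 => h j h1 (by omega)
    rw [faceEntry, faceEntry, ih h', ih h', h (g + 1) (by omega) le_rfl]

/-- Each free entry lies strictly between its two neighbours on the previous diagonal. -/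
def Interlaced (t : ℕ → ℝ) (G : ℕ) : Prop :=
  ∀ j, 1 ≤ j → j ≤ G →
    faceEntry lam w t (rv w j + 1) (j - 1) < t j ∧ t j < faceEntry lam w t (rv w j) (j - 1)

variable {lam} in
lemma faceEntry_succ_lt (hstrict : ∀ i j : Fin (m + 1), i < j → lam j < lam i) {t : ℕ → ℝ}
    {g : ℕ} (hg : g ≤ m) (ht : Interlaced lam w t g) {i : ℕ} (h1 : 1 ≤ i)
    (h2 : i + g + 1 ≤ m + 1) : faceEntry lam w t (i + 1) g < faceEntry lam w t i g := by
  induction g generalizing i with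
  | zero =>
    rw [faceEntry, faceEntry, dif_pos (by omega), dif_pos (by omega)]
    exact hstrict ⟨i - 1, by omega⟩ ⟨i + 1 - 1, by omega⟩ (Fin.mk_lt_mk.mpr (by omega))
  | succ g ih =>
    have ih' : ∀ {i}, 1 ≤ i → i + g + 1 ≤ m + 1 → _ :=
      ih (by omega) fun j h1 h2 => ht j h1 (by omega)
    have hr1 := one_le_rv w (j := g + 1) (by omega) hg
    have hr2 := rv_le w (j := g + 1) (by omega) hg
    have hsand := ht (g + 1) (by omega) le_rfl
    simp only [Nat.add_sub_cancel] at hsand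
    rw [faceEntry, faceEntry]
    rcases lt_trichotomy (i + 1) (rv w (g + 1)) with hc | hc | hc
    · rw [if_pos hc, if_pos (by omega)]
      exact ih' h1 (by omega)
    · rw [if_neg (by omega), if_pos hc, if_pos (by omega)]
      rw [← hc] at hsand
      exact hsand.2.trans (ih' h1 (by omega))
    · rw [if_neg (by omega), if_neg (by omega)]
      rcases (Nat.lt_succ_iff.mp hc).eq_or_lt with hd | hd
      · rw [if_neg (by omega), if_pos hd.symm]
        rw [hd] at hsand
        exact (ih' (by omega) (by omega)).trans hsand.1
      · rw [if_neg (by omega), if_neg (by omega)]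
        exact ih' (by omega) (by omega)

noncomputable def facePoint (t : ℕ → ℝ) : GZIdx (m + 1) → ℝ :=
  fun p => faceEntry lam w t (p.1.1 + 1) (p.1.2 - p.1.1)

lemma GZX_facePoint (t : ℕ → ℝ) {i j : ℕ} (h1 : 1 ≤ i) (h2 : i ≤ j) (h3 : j ≤ m + 1) :
    GZX lam (facePoint lam w t) i j = faceEntry lam w t i (j - i) := by
  rw [GZX, dif_pos ⟨h1, h2, h3⟩]
  rcases h2.eq_or_lt with rfl | hlt
  · rw [dif_neg (lt_irrefl i), Nat.sub_self, faceEntry, dif_pos ⟨h1, h3⟩]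
  · rw [dif_pos hlt]
    show faceEntry lam w t (i - 1 + 1) (j - 1 - (i - 1)) = _
    rw [Nat.sub_add_cancel h1, Nat.sub_sub_sub_cancel_right h1]

variable {lam} in
lemma facePoint_mem_GZpoly (hstrict : ∀ i j : Fin (m + 1), i < j → lam j < lam i)
    {t : ℕ → ℝ} (ht : Interlaced lam w t m) : facePoint lam w t ∈ GZpoly lam := by
  intro i j h1 h2 h3
  rw [GZX_facePoint lam w t h1 (by omega) (by omega), GZX_facePoint lam w t h1 h2 (by omega),
    GZX_facePoint lam w t (by omega) (by omega) (by omega), Nat.succ_sub h2,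
    Nat.add_sub_add_right, faceEntry]
  have hlt := faceEntry_succ_lt w hstrict (g := j - i) (by omega)
    (fun k h1 _ => ht k h1 (by omega)) h1 (by omega)
  rcases lt_trichotomy i (rv w (j - i + 1)) with hc | hc | hc
  · rw [if_pos hc]
    exact ⟨le_rfl, hlt.le⟩
  · have hj : j - i + 1 ≤ m := by
      by_contra hj
      rw [rv, dif_neg (by omega)] at hc
      omega
    have hsand := ht (j - i + 1) (by omega) hj
    rw [Nat.add_sub_cancel, ← hc] at hsand
    rw [if_neg hc.not_lt, if_pos hc]
    exact ⟨hsand.2.le, hsand.1.le⟩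
  · rw [if_neg (by omega), if_neg (by omega)]
    exact ⟨hlt.le, le_rfl⟩

variable {lam} in
lemma facePoint_mem_GZface (hstrict : ∀ i j : Fin (m + 1), i < j → lam j < lam i)
    {t : ℕ → ℝ} (ht : Interlaced lam w t m) : facePoint lam w t ∈ GZface lam w := by
  refine ⟨facePoint_mem_GZpoly w hstrict ht,
    fun j hj1 hjm i => ⟨fun hi1 hir => ?_, fun hir him => ?_⟩⟩
  all_goals
    have := rv_le w hj1 hjm
    obtain ⟨g, rfl⟩ : ∃ g, j = g + 1 := ⟨j - 1, by omega⟩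
  · rw [GZX_facePoint lam w t hi1 (by omega) (by omega),
      GZX_facePoint lam w t hi1 (by omega) (by omega), Nat.add_sub_cancel_left,
      show i + (g + 1) - 1 - i = g by omega, faceEntry, if_pos (by omega)]
  · rw [GZX_facePoint lam w t (by omega) (by omega) (by omega),
      GZX_facePoint lam w t (by omega) (by omega) (by omega), Nat.add_sub_cancel_left,
      show i + (g + 1) - (i + 1) = g by omega, faceEntry, if_neg (by omega), if_neg (by omega)]

lemma GZX_eq_faceEntry {x : GZIdx (m + 1) → ℝ} (hx : x ∈ GZface lam w) {g i : ℕ}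
    (hg : g ≤ m) (h1 : 1 ≤ i) (h2 : i + g ≤ m + 1) :
    GZX lam x i (i + g) = faceEntry lam w (fun j => GZX lam x (rv w j) (rv w j + j)) i g := by
  induction g generalizing i with
  | zero =>
    rw [faceEntry, dif_pos ⟨h1, by omega⟩, GZX, dif_pos ⟨h1, by omega, by omega⟩,
      dif_neg (by omega)]
  | succ g ih =>
    have hface := hx.2 (g + 1) (by omega) hg i
    rw [faceEntry]
    rcases lt_trichotomy i (rv w (g + 1)) with hc | rfl | hc
    · rw [if_pos hc, ← ih (by omega) h1 (by omega), hface.1 h1 (by omega),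
        show i + (g + 1) - 1 = i + g by omega]
    · rw [if_neg (lt_irrefl _), if_pos rfl]
    · have := rv_le w (j := g + 1) (by omega) hg
      rw [if_neg (by omega), if_neg (by omega), ← ih (by omega) (by omega) (by omega),
        hface.2 (by omega) (by omega), show i + 1 + g = i + (g + 1) by omega]

lemma eq_facePoint {x : GZIdx (m + 1) → ℝ} (hx : x ∈ GZface lam w) :
    x = facePoint lam w (fun j => GZX lam x (rv w j) (rv w j + j)) := by
  funext p
  have hp : (p.1.1 : ℕ) < p.1.2 := p.2
  have h2 : (p.1.2 : ℕ) < m + 1 := p.1.2.isLt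
  rw [facePoint, ← GZX_eq_faceEntry lam w hx (by omega) (by omega) (by omega),
    show p.1.1.val + 1 + (p.1.2.val - p.1.1.val) = p.1.2.val + 1 by omega, GZX,
    dif_pos ⟨by omega, by omega, by omega⟩, dif_pos (by omega)]
  rfl

variable {lam} in
lemma exists_interlaced (hstrict : ∀ i j : Fin (m + 1), i < j → lam j < lam i) {G : ℕ}
    (hG : G ≤ m) : ∃ t, Interlaced lam w t G := by
  induction G with
  | zero => exact ⟨0, fun j h1 h2 => absurd h2 (by omega)⟩
  | succ G ih =>
    obtain ⟨t, ht⟩ := ih (by omega)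
    set a := faceEntry lam w t (rv w (G + 1) + 1) G
    set b := faceEntry lam w t (rv w (G + 1)) G
    have hab : a < b := faceEntry_succ_lt w hstrict (by omega) ht (one_le_rv w (by omega) hG)
      (by have := rv_le w (j := G + 1) (by omega) hG; omega)
    refine ⟨Function.update t (G + 1) ((a + b) / 2), fun j h1 h2 => ?_⟩
    have hcongr : ∀ i, faceEntry lam w (Function.update t (G + 1) ((a + b) / 2)) i (j - 1) =
        faceEntry lam w t i (j - 1) :=
      faceEntry_congr lam w fun k _ hk => Function.update_of_ne (by omega) _ _
    rw [hcongr, hcongr]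
    rcases h2.lt_or_eq with hj | rfl
    · rw [Function.update_of_ne (by omega)]
      exact ht j h1 (by omega)
    · rw [Function.update_self, Nat.add_sub_cancel]
      constructor <;> linarith

lemma isOpen_setOf_interlaced (G : ℕ) : IsOpen {t | Interlaced lam w t G} := by
  have : {t | Interlaced lam w t G} = ⋂ j ∈ Finset.Icc 1 G,
      {t | faceEntry lam w t (rv w j + 1) (j - 1) < t j ∧
        t j < faceEntry lam w t (rv w j) (j - 1)} := by
    ext t
    simp [Interlaced]
  rw [this]
  exact isOpen_biInter_finset fun j _ =>
    (isOpen_lt (continuous_faceEntry lam w _ _) (continuous_apply j)).inter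
      (isOpen_lt (continuous_apply j) (continuous_faceEntry lam w _ _))

variable {lam} in
lemma exists_interlaced_add_smul (hstrict : ∀ i j : Fin (m + 1), i < j → lam j < lam i)
    (e : ℕ → ℝ) :
    ∃ t, ∃ ε ≠ (0 : ℝ), Interlaced lam w t m ∧ Interlaced lam w (t + ε • e) m := by
  obtain ⟨t, ht⟩ := exists_interlaced w hstrict le_rfl
  have hopen : IsOpen ((fun ε : ℝ => t + ε • e) ⁻¹' {t | Interlaced lam w t m}) :=
    (isOpen_setOf_interlaced lam w m).preimage (by fun_prop)
  obtain ⟨δ, hδ, hball⟩ := Metric.isOpen_iff.mp hopen 0 (by simpa using ht)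
  refine ⟨t, δ / 2, by positivity, ht, hball ?_⟩
  rw [Metric.mem_ball, dist_zero_right, Real.norm_of_nonneg (by positivity)]
  linarith

def faceBasis (k : Fin m) : GZIdx (m + 1) → ℝ :=
  fun p => if faceSource w (p.1.1 + 1) (p.1.2 - p.1.1) = k + 1 then 1 else 0

lemma facePoint_sub_facePoint (t s : ℕ → ℝ) :
    facePoint lam w t - facePoint lam w s =
      ∑ k : Fin m, (t (k + 1) - s (k + 1)) • faceBasis w k := by
  funext p
  have hle : faceSource w (p.1.1 + 1) (p.1.2 - p.1.1) ≤ m :=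
    (faceSource_le w _ _).trans (by omega)
  simp only [Pi.sub_apply, facePoint, faceEntry_sub_faceEntry, Finset.sum_apply, Pi.smul_apply,
    faceBasis, smul_eq_mul, mul_ite, mul_one, mul_zero]
  generalize faceSource w (p.1.1 + 1) (p.1.2 - p.1.1) = d at hle ⊢
  rcases d with _ | d
  · simp
  · rw [Finset.sum_eq_single ⟨d, hle⟩] <;> simp +contextual [Fin.ext_iff, eq_comm]

/-- The position of the free entry `x_{r_{j+1}, r_{j+1} + j + 1}`, in the 0-based indices of
`GZIdx`. -/
def freeIdx (j : Fin m) : GZIdx (m + 1) :=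
  ⟨(⟨rv w (j + 1) - 1, by have := rv_le w (j := j + 1) (by omega) j.2; omega⟩,
    ⟨rv w (j + 1) + j, by have := rv_le w (j := j + 1) (by omega) j.2; omega⟩),
    Fin.mk_lt_mk.mpr (by have := one_le_rv w (j := j + 1) (by omega) j.2; omega)⟩

lemma faceBasis_freeIdx (k j : Fin m) :
    faceBasis w k (freeIdx w j) = (Pi.single k 1 : Fin m → ℝ) j := by
  have := one_le_rv w (j := j + 1) (by omega) j.2
  simp only [faceBasis, freeIdx, Nat.sub_add_cancel this,
    show rv w (j + 1) + j - (rv w (j + 1) - 1) = j + 1 by omega]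
  rw [faceSource]
  simp [Pi.single_apply, Fin.ext_iff, eq_comm]

lemma linearIndependent_faceBasis : LinearIndependent ℝ (faceBasis (m := m) w) := by
  refine LinearIndependent.of_comp (LinearMap.funLeft ℝ ℝ (freeIdx w)) ?_
  convert (Pi.basisFun ℝ (Fin m)).linearIndependent using 1
  ext k j
  simpa using faceBasis_freeIdx w k j

variable {lam} in
theorem direction_affineSpan_GZface (hstrict : ∀ i j : Fin (m + 1), i < j → lam j < lam i) :
    (affineSpan ℝ (GZface lam w)).direction = Submodule.span ℝ (Set.range (faceBasis w)) := by
  apply le_antisymm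
  · rw [direction_affineSpan, vectorSpan_def, Submodule.span_le]
    rintro _ ⟨x, hx, y, hy, rfl⟩
    dsimp only
    rw [eq_facePoint lam w hx, eq_facePoint lam w hy, vsub_eq_sub, facePoint_sub_facePoint]
    exact Submodule.sum_mem _ fun k _ => Submodule.smul_mem _ _ (Submodule.subset_span ⟨k, rfl⟩)
  · rw [Submodule.span_le]
    rintro _ ⟨k, rfl⟩
    obtain ⟨t, ε, hε, ht, htε⟩ :=
      exists_interlaced_add_smul w hstrict (Pi.single (k + 1 : ℕ) 1)
    have hdiff : facePoint lam w (t + ε • Pi.single (k + 1 : ℕ) 1) -ᵥ facePoint lam w t =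
        ε • faceBasis w k := by
      rw [vsub_eq_sub, facePoint_sub_facePoint, Finset.sum_eq_single k] <;>
        simp +contextual [Fin.ext_iff]
    rw [SetLike.mem_coe, ← Submodule.smul_mem_iff _ hε, ← hdiff]
    exact AffineSubspace.vsub_mem_direction
      (subset_affineSpan ℝ _ (facePoint_mem_GZface w hstrict htε))
      (subset_affineSpan ℝ _ (facePoint_mem_GZface w hstrict ht))

end GZ

theorem stmt6_general (m : ℕ) (lam : Fin (m + 1) → ℝ)
    (hstrict : ∀ i j : Fin (m + 1), i < j → lam j < lam i)
    (w : Equiv.Perm (Fin m)) :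
    Module.finrank ℝ (affineSpan ℝ (GZface lam w)).direction = m := by
  rw [GZ.direction_affineSpan_GZface w hstrict,
    finrank_span_eq_card (GZ.linearIndependent_faceBasis w), Fintype.card_fin]

/-- For strictly decreasing `λ` (with `λ_n ≥ 0`), the face `GZ(λ, w)` has dimension `n - 1 = m`. -/
theorem stmt6 (m : ℕ) (lam : Fin (m + 1) → ℝ)
    (hstrict : ∀ i j : Fin (m + 1), i < j → lam j < lam i)
    (h0 : ∀ i, 0 ≤ lam i) (w : Equiv.Perm (Fin m)) :
    Module.finrank ℝ (affineSpan ℝ (GZface lam w)).direction = m :=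
  stmt6_general m lam hstrict w
end

section
/- (Rank Lemma for adding the first row.) Let w ∈ S_{n-1} with associated vector (r_1, ..., r_{n-1}), let A_w be the associated 0-pattern matrix with generic nonzero entries, let S ⊆ {2, ..., n}, and set S^+ = {1} ∪ S. Then rk((A_w)_{S^+, j}) = rk((A_w)_{S, j}) if j ≤ r_1 - 1; rk((A_w)_{S^+, r_1}) = rk((A_w)_{S, r_1 - 1}) + 1; and rk((A_w)_{S^+, j}) = rk((A_w)_{S, j}) + 1 if j ≥ r_1 + 1. -/
/-- `rvecS w j`: the rank of `w⁻¹ j` counted from the smallest among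
`w⁻¹ j, ..., w⁻¹ (m-1)` (0-based indexing); this is the convention under which the
first row of `A_w` has its stars in columns `r_1` and `r_1 + 1` (1-based). -/
def rvecS {m : ℕ} (w : Equiv.Perm (Fin m)) (j : Fin m) : ℕ :=
  (Finset.univ.filter (fun k : Fin m => j ≤ k ∧ w⁻¹ k ≤ w⁻¹ j)).card

/-- The column (0-based) of the distinguished entry `⋆₂` in row `i` of `A_w`:
column `w⁻¹(i) + 1` (1-based) for `i ≤ n - 1`, and column `1` for the last row. -/
def star2 {m : ℕ} (w : Equiv.Perm (Fin m)) (i : Fin (m + 1)) : Fin (m + 1) :=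
  if h : (i : ℕ) < m then Fin.succ (w⁻¹ ⟨(i : ℕ), h⟩) else 0

/-- The column (0-based) of the entry `⋆₁` in row `i` of `A_w`: the rightmost column
to the left of the `⋆₂`-column of row `i` containing no `⋆₂` in any earlier row. -/
def star1col {m : ℕ} (w : Equiv.Perm (Fin m)) (i : Fin (m + 1)) : ℕ :=
  ((Finset.range (star2 w i : ℕ)).filter
    (fun c => ∀ i' : Fin (m + 1), i' < i → (star2 w i' : ℕ) ≠ c)).sup id

/-- The support (pattern of possibly-nonzero entries) of the matrix `A_w`. -/
def AwSupp {m : ℕ} (w : Equiv.Perm (Fin m)) (i c : Fin (m + 1)) : Prop :=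
  c = star2 w i ∨ ((i : ℕ) < m ∧ (c : ℕ) = star1col w i)

/-- The rank of the submatrix of `A` on rows `S` and the first `j` columns. -/
noncomputable def rkSub {n : ℕ} (A : Matrix (Fin n) (Fin n) ℂ) (S : Finset (Fin n))
    (j : ℕ) : ℕ :=
  (Matrix.of (fun (i : {i : Fin n // i ∈ S}) (k : {k : Fin n // (k : ℕ) < j}) =>
    A i.1 k.1)).rank

/-! With `t = w⁻¹ 0` (0-based indices), `r₁ = t + 1` and the first row of `A_w` is supported on
columns `t` and `t + 1`. Column `t + 1` holds the `⋆₂` of the first row, and no later row can have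
an entry there, so it vanishes on `S`. Hence for `j ≤ t` the first row restricted to the first `j`
columns is zero; for `j ≥ t + 2` it is linearly independent of the rows of `S` through column
`t + 1`; and for `j = t + 1` its only entry lies in the last column `t`, which therefore contributes
exactly one to the rank on top of the first `t` columns. -/

open Module Submodule

theorem Submodule.finrank_span_insert_of_apply_ne_zero {K V : Type*} [Field K] [AddCommGroup V]
    [Module K V] [FiniteDimensional K V] {X : Set V} {v : V} (f : V →ₗ[K] K)
    (hX : ∀ x ∈ X, f x = 0) (hv : f v ≠ 0) :
    finrank K (span K (insert v X)) = finrank K (span K X) + 1 := by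
  have hle : span K X ≤ LinearMap.ker f := span_le.mpr hX
  rw [span_insert, sup_comm, finrank_sup_span_singleton fun hmem => hv (hle hmem)]

section rkSub

variable {n : ℕ} (A : Matrix (Fin n) (Fin n) ℂ)

theorem rkSub_eq_finrank_span_rows (T : Finset (Fin n)) (j : ℕ) :
    rkSub A T j = finrank ℂ (span ℂ
      ((fun i (k : {k : Fin n // (k : ℕ) < j}) => A i k) '' (T : Set (Fin n)))) := by
  rw [rkSub, Matrix.rank_eq_finrank_span_row, Set.image_eq_range]
  rfl

theorem rkSub_eq_finrank_span_cols (T : Finset (Fin n)) (j : ℕ) :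
    rkSub A T j = finrank ℂ (span ℂ
      ((fun c (i : {i : Fin n // i ∈ T}) => A i c) '' {c | (c : ℕ) < j})) := by
  rw [rkSub, Matrix.rank_eq_finrank_span_cols, Set.image_eq_range]
  rfl

theorem rkSub_insert_of_row_eq_zero {T : Finset (Fin n)} {j : ℕ} {i₀ : Fin n}
    (h : ∀ c : Fin n, (c : ℕ) < j → A i₀ c = 0) :
    rkSub A (insert i₀ T) j = rkSub A T j := by
  have hrow : (fun (k : {k : Fin n // (k : ℕ) < j}) => A i₀ k) = 0 := funext fun k => h k k.2
  rw [rkSub_eq_finrank_span_rows, rkSub_eq_finrank_span_rows, Finset.coe_insert,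
    Set.image_insert_eq, hrow, span_insert_zero]

theorem rkSub_insert_of_col_pivot {T : Finset (Fin n)} {j : ℕ} {i₀ c₀ : Fin n}
    (hc₀ : (c₀ : ℕ) < j) (hpiv : A i₀ c₀ ≠ 0) (hcol : ∀ i ∈ T, A i c₀ = 0) :
    rkSub A (insert i₀ T) j = rkSub A T j + 1 := by
  rw [rkSub_eq_finrank_span_rows, rkSub_eq_finrank_span_rows, Finset.coe_insert,
    Set.image_insert_eq]
  refine finrank_span_insert_of_apply_ne_zero
    (LinearMap.proj (φ := fun _ => ℂ) (⟨c₀, hc₀⟩ : {k : Fin n // (k : ℕ) < j})) ?_ hpiv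
  rintro _ ⟨i, hi, rfl⟩
  exact hcol i hi

theorem rkSub_succ_of_row_pivot {T : Finset (Fin n)} {i₀ c₀ : Fin n} (hi₀ : i₀ ∈ T)
    (hpiv : A i₀ c₀ ≠ 0) (hrow : ∀ c : Fin n, c < c₀ → A i₀ c = 0) :
    rkSub A T ((c₀ : ℕ) + 1) = rkSub A T c₀ + 1 := by
  have hcols : {c : Fin n | (c : ℕ) < c₀ + 1} = insert c₀ {c : Fin n | (c : ℕ) < c₀} := by
    ext c
    simp only [Set.mem_ofPred_eq, Set.mem_insert_iff, Fin.ext_iff]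
    omega
  rw [rkSub_eq_finrank_span_cols, rkSub_eq_finrank_span_cols, hcols, Set.image_insert_eq]
  refine finrank_span_insert_of_apply_ne_zero
    (LinearMap.proj (φ := fun _ => ℂ) (⟨i₀, hi₀⟩ : {i : Fin n // i ∈ T})) ?_ hpiv
  rintro _ ⟨c, hc, rfl⟩
  exact hrow c hc

end rkSub

section Aw

variable {m : ℕ} (w : Equiv.Perm (Fin m))

theorem rvecS_zero (hm : 0 < m) : rvecS w ⟨0, hm⟩ = (w⁻¹ ⟨0, hm⟩ : ℕ) + 1 := by
  have hfilter : (Finset.univ.filter fun k : Fin m => ⟨0, hm⟩ ≤ k ∧ w⁻¹ k ≤ w⁻¹ ⟨0, hm⟩)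
      = (Finset.Iic (w⁻¹ ⟨0, hm⟩)).map w.toEmbedding := by
    ext k
    simp only [Finset.mem_filter, Finset.mem_univ, true_and, Finset.mem_map_equiv,
      Finset.mem_Iic, Fin.le_def, Nat.zero_le]
    rfl
  rw [rvecS, hfilter, Finset.card_map, Fin.card_Iic]

theorem star2_injective : Function.Injective (star2 w) := by
  intro i i' h
  unfold star2 at h
  split_ifs at h with hi hi'
  · exact Fin.ext (by simpa using w⁻¹.injective (Fin.succ_injective _ h))
  · exact absurd h (Fin.succ_ne_zero _)
  · exact absurd h.symm (Fin.succ_ne_zero _)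
  · exact Fin.ext (by omega)

theorem star2_zero (hm : 0 < m) : star2 w 0 = (w⁻¹ ⟨0, hm⟩).succ := by
  simp [star2, hm]

theorem star1col_ne_star2_of_lt {i i' : Fin (m + 1)} (h : i' < i) :
    star1col w i ≠ star2 w i' := by
  set F := (Finset.range (star2 w i : ℕ)).filter
    (fun c => ∀ i'' : Fin (m + 1), i'' < i → (star2 w i'' : ℕ) ≠ c)
  have hsupF : star1col w i = F.sup id := rfl
  rcases F.eq_empty_or_nonempty with hF | hF
  · have hi' : (i' : ℕ) < m := by omega
    rw [hsupF, hF, Finset.sup_empty]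
    simp [star2, hi']
  · obtain ⟨c, hc, hsup⟩ := Finset.exists_mem_eq_sup F hF id
    rw [hsupF, hsup]
    exact ((Finset.mem_filter.1 hc).2 i' h).symm

theorem star1col_zero (hm : 0 < m) : star1col w 0 = (w⁻¹ ⟨0, hm⟩ : ℕ) := by
  have hfilter : (Finset.range (star2 w 0 : ℕ)).filter
      (fun c => ∀ i' : Fin (m + 1), i' < 0 → (star2 w i' : ℕ) ≠ c)
      = Finset.range ((w⁻¹ ⟨0, hm⟩ : ℕ) + 1) := by
    rw [star2_zero w hm, Fin.val_succ, Finset.filter_true_of_mem]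
    intro c _ i' hi'
    exact absurd hi' (Fin.not_lt_zero i')
  rw [star1col, hfilter]
  exact le_antisymm (Finset.sup_le fun c hc => Nat.lt_succ_iff.1 (Finset.mem_range.1 hc))
    (Finset.le_sup (f := id) (Finset.self_mem_range_succ _))

theorem awSupp_zero_iff (hm : 0 < m) (c : Fin (m + 1)) :
    AwSupp w 0 c ↔ c = (w⁻¹ ⟨0, hm⟩).succ ∨ (c : ℕ) = w⁻¹ ⟨0, hm⟩ := by
  simp [AwSupp, star2_zero w hm, star1col_zero w hm, hm]

theorem le_of_awSupp_star2 {i i' : Fin (m + 1)} (h : AwSupp w i (star2 w i')) : i ≤ i' := by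
  by_contra! hlt
  rcases h with h | ⟨-, h⟩
  · exact hlt.ne' (star2_injective w h.symm)
  · exact star1col_ne_star2_of_lt w hlt h.symm

end Aw

/-- Rank lemma for adding the first row: for `S ⊆ {2, …, n}` and `S⁺ = {1} ∪ S`,
the ranks of `(A_w)_{S⁺, j}` and `(A_w)_{S, j}` compare as stated, where
`r_1 = rvecS w 0`. -/
theorem stmt11 (m : ℕ) (hm : 0 < m) (w : Equiv.Perm (Fin m))
    (A : Matrix (Fin (m + 1)) (Fin (m + 1)) ℂ)
    (hA : ∀ i c, A i c ≠ 0 ↔ AwSupp w i c)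
    (S : Finset (Fin (m + 1))) (hS : (0 : Fin (m + 1)) ∉ S) :
    (∀ j, j + 1 ≤ rvecS w ⟨0, hm⟩ →
        rkSub A (insert 0 S) j = rkSub A S j) ∧
    rkSub A (insert 0 S) (rvecS w ⟨0, hm⟩) =
      rkSub A S (rvecS w ⟨0, hm⟩ - 1) + 1 ∧
    (∀ j, rvecS w ⟨0, hm⟩ + 1 ≤ j →
        rkSub A (insert 0 S) j = rkSub A S j + 1) := by
  set t := w⁻¹ ⟨0, hm⟩
  have hrow0 : ∀ c, A 0 c ≠ 0 ↔ c = t.succ ∨ (c : ℕ) = t :=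
    fun c => (hA 0 c).trans (awSupp_zero_iff w hm c)
  have hrow0_eq_zero : ∀ c : Fin (m + 1), (c : ℕ) < t → A 0 c = 0 := fun c hc => by
    by_contra hne
    rcases (hrow0 c).1 hne with rfl | h
    · simp at hc
    · omega
  have hcol : ∀ i ∈ S, A i t.succ = 0 := fun i hi => by
    by_contra hne
    have hle := le_of_awSupp_star2 w (i' := 0) (by rw [star2_zero w hm]; exact (hA i _).1 hne)
    exact hS (nonpos_iff_eq_zero.1 hle ▸ hi)
  rw [rvecS_zero w hm]
  refine ⟨fun j hj => rkSub_insert_of_row_eq_zero A fun c hc => hrow0_eq_zero c (by omega),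
    ?_, fun j hj => rkSub_insert_of_col_pivot A (by rw [Fin.val_succ]; omega)
      ((hrow0 _).2 (Or.inl rfl)) hcol⟩
  have hpiv : A 0 t.castSucc ≠ 0 := (hrow0 _).2 (Or.inr rfl)
  rw [Nat.add_sub_cancel, ← Fin.val_castSucc t,
    rkSub_succ_of_row_pivot A (Finset.mem_insert_self 0 S) hpiv fun c hc => hrow0_eq_zero c hc,
    rkSub_insert_of_row_eq_zero A fun c (hc : (c : ℕ) < t.castSucc) => hrow0_eq_zero c hc]
end

section
/- (Schubert containment of the special orbit.) Let w ∈ S_{n-1}, let L_i ⊆ ℂ^n be the span of the first i columns of A_w, and for S ⊆ [n] let H_S = { v ∈ ℂ^n : v_i = 0 for all i ∈ S }. Then for all i, j: dim(L_i ∩ H_{[1,j]}) ≥ #({w(1), ..., w(i)} ∩ {j+1, ..., n-1}) and dim(L_i ∩ H_{[n+1-j, n]}) ≥ #({w(1), ..., w(i-1)} ∩ {1, ..., n-j}). -/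
/-- `L_i`: the span of the first `i` columns of `A`. -/
noncomputable def colSpan {n : ℕ} (A : Matrix (Fin n) (Fin n) ℂ) (i : ℕ) : Submodule ℂ (Fin n → ℂ) :=
  Submodule.span ℂ {v : Fin n → ℂ | ∃ c : Fin n, (c : ℕ) < i ∧ v = fun r => A r c}

/-- `H_S`: the coordinate subspace of vectors whose coordinates indexed by `S` vanish. -/
noncomputable def coordSub (n : ℕ) (S : Set (Fin n)) : Submodule ℂ (Fin n → ℂ) :=
  ⨅ k ∈ S, LinearMap.ker ((LinearMap.proj k : (Fin n → ℂ) →ₗ[ℂ] ℂ))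

namespace Stmt17
variable {m : ℕ} (w : Equiv.Perm (Fin m))

/-- pivot row (as a natural number) of column `c` (given as a natural number). -/
def pvN (c : ℕ) : ℕ := if h : 1 ≤ c ∧ c ≤ m then (w ⟨c - 1, by omega⟩ : ℕ) else m

lemma pvN_le (c : ℕ) : pvN w c ≤ m := by
  unfold pvN; split
  · exact Nat.le_of_lt (w _).isLt
  · exact le_rfl

lemma pvN_zero : pvN w 0 = m := by simp [pvN]

lemma pvN_succ (k : Fin m) : pvN w ((k : ℕ) + 1) = (w k : ℕ) := by
  have h : 1 ≤ (k : ℕ) + 1 ∧ (k : ℕ) + 1 ≤ m := ⟨Nat.le_add_left _ _, k.isLt⟩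
  simp only [pvN, dif_pos h]
  exact congrArg (fun x => ((w x : Fin m) : ℕ)) (Fin.ext (by simp))

lemma pvN_lt_m {c : ℕ} (h1 : 1 ≤ c) (h2 : c ≤ m) : pvN w c < m := by
  simp only [pvN, dif_pos (⟨h1, h2⟩ : 1 ≤ c ∧ c ≤ m)]
  exact (w _).isLt


lemma pv_star2 (r : Fin (m + 1)) : pvN w ((star2 w r : Fin (m+1)) : ℕ) = (r : ℕ) := by
  unfold star2
  split
  · rename_i h
    rw [show ((Fin.succ (w⁻¹ ⟨(r : ℕ), h⟩) : Fin (m+1)) : ℕ) = ((w⁻¹ ⟨(r : ℕ), h⟩ : Fin m) : ℕ) + 1 from rfl]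
    rw [pvN_succ]
    simp
  · rename_i h
    have : (r : ℕ) = m := by omega
    simp [pvN_zero, this]

lemma star2_rowOf (c : Fin (m + 1)) :
    star2 w ⟨pvN w (c : ℕ), Nat.lt_succ_of_le (pvN_le w _)⟩ = c := by
  rcases Nat.eq_zero_or_pos (c : ℕ) with h0 | h1
  · have : pvN w (c : ℕ) = m := by rw [h0, pvN_zero]
    unfold star2
    rw [dif_neg (by simp [this])]
    exact (Fin.ext h0.symm)
  · have hc : 1 ≤ (c : ℕ) ∧ (c : ℕ) ≤ m := ⟨h1, Nat.lt_succ_iff.mp c.isLt⟩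
    have hpv : pvN w (c : ℕ) = (w ⟨(c : ℕ) - 1, by omega⟩ : ℕ) := dif_pos hc
    apply Fin.ext
    unfold star2
    split
    · rename_i h
      have he : (⟨pvN w (c:ℕ), h⟩ : Fin m) = w ⟨(c : ℕ) - 1, by omega⟩ := Fin.ext hpv
      rw [he]
      simp only [Equiv.Perm.inv_def, Equiv.symm_apply_apply, Fin.val_succ]
      omega
    · rename_i h
      exact absurd (lt_of_eq_of_lt hpv (w _).isLt) h

lemma pv_inj {c c' : Fin (m + 1)} (h : pvN w (c : ℕ) = pvN w (c' : ℕ)) : c = c' := by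
  have := star2_rowOf w c
  rw [show (⟨pvN w (c : ℕ), _⟩ : Fin (m+1)) = ⟨pvN w (c' : ℕ), Nat.lt_succ_of_le (pvN_le w _)⟩ from Fin.ext h] at this
  rw [star2_rowOf w c'] at this
  exact this.symm

/-- The row (as `Fin (m+1)`) in which column `c` has its `⋆₂` entry. -/
def rowOf (c : ℕ) : Fin (m + 1) := ⟨pvN w c, Nat.lt_succ_of_le (pvN_le w _)⟩

lemma star2_rowOf' (c : Fin (m + 1)) : star2 w (rowOf w (c : ℕ)) = c := star2_rowOf w c

lemma star2_pos {r : Fin (m + 1)} (hr : (r : ℕ) < m) : 1 ≤ (star2 w r : ℕ) := by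
  unfold star2; rw [dif_pos hr]; simp

lemma star1_mem {r : Fin (m + 1)} (hr : (r : ℕ) < m) :
    star1col w r ∈ (Finset.range (star2 w r : ℕ)).filter
      (fun c => ∀ i' : Fin (m + 1), i' < r → (star2 w i' : ℕ) ≠ c) := by
  have hne : ((Finset.range (star2 w r : ℕ)).filter
      (fun c => ∀ i' : Fin (m + 1), i' < r → (star2 w i' : ℕ) ≠ c)).Nonempty := by
    refine ⟨0, Finset.mem_filter.mpr ⟨Finset.mem_range.mpr (star2_pos w hr), ?_⟩⟩
    intro i' hi'
    have hi'm : (i' : ℕ) < m := lt_of_lt_of_le (Fin.lt_iff_val_lt_val.mp hi') (by omega)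
    unfold star2; rw [dif_pos hi'm]; simp
  obtain ⟨b, hb, he⟩ := Finset.exists_mem_eq_sup _ hne id
  unfold star1col
  rw [show (id b : ℕ) = b from rfl] at he
  rw [he]; exact hb

lemma star1_lt {r : Fin (m + 1)} (hr : (r : ℕ) < m) : star1col w r < (star2 w r : ℕ) :=
  Finset.mem_range.mp (Finset.mem_filter.mp (star1_mem w hr)).1

lemma star1_avoid {r : Fin (m + 1)} (hr : (r : ℕ) < m) :
    ∀ i' : Fin (m + 1), i' < r → (star2 w i' : ℕ) ≠ star1col w r :=
  (Finset.mem_filter.mp (star1_mem w hr)).2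

/-- the pivot of the ⋆₁-column is strictly below row `r`. -/
lemma lt_pv_star1 {r : Fin (m + 1)} (hr : (r : ℕ) < m) :
    (r : ℕ) < pvN w (star1col w r) := by
  set x := star1col w r with hx
  have hsl : x < (star2 w r : ℕ) := star1_lt w hr
  have hxle : x ≤ m := by
    have := (star2 w r).isLt; omega
  have hrow : (star2 w (rowOf w x) : ℕ) = x := by
    rw [star2_rowOf' w ⟨x, by omega⟩]
  by_contra hcon
  push_neg at hcon
  rcases Nat.lt_or_ge (pvN w x) (r : ℕ) with hlt | hge
  · exact star1_avoid w hr (rowOf w x) (Fin.lt_iff_val_lt_val.mpr hlt) hrow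
  · have heq : (rowOf w x : ℕ) = (r : ℕ) := le_antisymm hcon hge
    have hre : rowOf w x = r := Fin.ext heq
    rw [hre] at hrow
    omega

/-- maximality of ⋆₁: columns strictly between it and the ⋆₂ column have pivot `< r`. -/
lemma star1_max {r : Fin (m + 1)} (hr : (r : ℕ) < m) {x' : ℕ}
    (h1 : star1col w r < x') (h2 : x' < (star2 w r : ℕ)) :
    pvN w x' < (r : ℕ) := by
  have hnot : x' ∉ (Finset.range (star2 w r : ℕ)).filter
      (fun c => ∀ i' : Fin (m + 1), i' < r → (star2 w i' : ℕ) ≠ c) := by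
    intro hmem
    have := Finset.le_sup (f := id) hmem
    rw [show (id x' : ℕ) = x' from rfl] at this
    unfold star1col at h1
    omega
  have : ¬ (∀ i' : Fin (m + 1), i' < r → (star2 w i' : ℕ) ≠ x') := by
    intro hall
    exact hnot (Finset.mem_filter.mpr ⟨Finset.mem_range.mpr h2, hall⟩)
  push_neg at this
  obtain ⟨i', hi', heq⟩ := this
  have : pvN w x' = (i' : ℕ) := by rw [← heq, pv_star2]
  have := Fin.lt_iff_val_lt_val.mp hi'
  omega



/-- termination measure fact: the ⋆₁ column of the pivot row of `x` is left of `x`. -/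
lemma star1_rowOf_lt {x : ℕ} (h1 : 1 ≤ x) (h2 : x ≤ m) :
    star1col w (rowOf w x) < x := by
  have hm : (rowOf w x : ℕ) < m := pvN_lt_m w h1 h2
  have := star1_lt w (r := rowOf w x) hm
  rwa [show star2 w (rowOf w x) = ⟨x, by omega⟩ from star2_rowOf' w ⟨x, by omega⟩] at this

/-- end of the correction chain starting at column `x` (relative to row cutoff `j`). -/
def ce (j : ℕ) (x : ℕ) : ℕ :=
  if h : 1 ≤ x ∧ x ≤ m ∧ pvN w x < j then
    have : star1col w (rowOf w x) < x := star1_rowOf_lt w h.1 h.2.1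
    ce j (star1col w (rowOf w x))
  else x
termination_by x

lemma ce_eq_of_stop {j x : ℕ} (h : ¬(1 ≤ x ∧ x ≤ m ∧ pvN w x < j)) : ce w j x = x := by
  rw [ce, dif_neg h]

lemma ce_eq_rec {j x : ℕ} (h : 1 ≤ x ∧ x ≤ m ∧ pvN w x < j) :
    ce w j x = ce w j (star1col w (rowOf w x)) := by
  rw [ce, dif_pos h]

lemma ce_self {j x : ℕ} (h : j ≤ pvN w x) : ce w j x = x := by
  apply ce_eq_of_stop
  rintro ⟨-, -, hlt⟩
  omega

lemma ce_pv {j : ℕ} (hj : j ≤ m) : ∀ x, x ≤ m → j ≤ pvN w (ce w j x) := by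
  intro x
  induction x using Nat.strong_induction_on with
  | _ x IH =>
    intro hx
    by_cases h : 1 ≤ x ∧ x ≤ m ∧ pvN w x < j
    · rw [ce_eq_rec w h]
      exact IH _ (star1_rowOf_lt w h.1 h.2.1) (le_trans (Nat.le_of_lt (star1_rowOf_lt w h.1 h.2.1)) hx)
    · rw [ce_eq_of_stop w h]
      rcases Nat.eq_zero_or_pos x with h0 | h1
      · rw [h0, pvN_zero]; exact hj
      · push_neg at h
        exact h h1 hx

lemma ce_le {j : ℕ} : ∀ x, ce w j x ≤ x := by
  intro x
  induction x using Nat.strong_induction_on with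
  | _ x IH =>
    by_cases h : 1 ≤ x ∧ x ≤ m ∧ pvN w x < j
    · rw [ce_eq_rec w h]
      exact le_trans (IH _ (star1_rowOf_lt w h.1 h.2.1)) (Nat.le_of_lt (star1_rowOf_lt w h.1 h.2.1))
    · rw [ce_eq_of_stop w h]

/-- chain domination: a column `c` with pivot `≥ j` lying weakly left of `x`
stays weakly left of the chain end of `x`. -/
lemma ce_dominates {j : ℕ} : ∀ x, x ≤ m → ∀ c : ℕ, j ≤ pvN w c → c ≤ x → c ≤ ce w j x := by
  intro x
  induction x using Nat.strong_induction_on with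
  | _ x IH =>
    intro hx c hc hcx
    by_cases h : 1 ≤ x ∧ x ≤ m ∧ pvN w x < j
    · have hcne : c ≠ x := by rintro rfl; omega
      have hcxlt : c < x := lt_of_le_of_ne hcx hcne
      have hrm : (rowOf w x : ℕ) < m := pvN_lt_m w h.1 h.2.1
      set x' := star1col w (rowOf w x) with hx'
      have hclex' : c ≤ x' := by
        by_contra hcon
        push_neg at hcon
        have h2 : c < (star2 w (rowOf w x) : ℕ) := by
          rw [show star2 w (rowOf w x) = ⟨x, by omega⟩ from star2_rowOf' w ⟨x, by omega⟩]
          exact hcxlt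
        have := star1_max w hrm hcon h2
        have hpv : (rowOf w x : ℕ) = pvN w x := rfl
        omega
      rw [ce_eq_rec w h]
      exact IH _ (star1_rowOf_lt w h.1 h.2.1)
        (le_trans (Nat.le_of_lt (star1_rowOf_lt w h.1 h.2.1)) hx) c hc hclex'
    · rw [ce_eq_of_stop w h]; exact hcx

end Stmt17


namespace Stmt17
variable {m : ℕ} (w : Equiv.Perm (Fin m))

lemma indep_echelon {N : ℕ} {ι : Type*} (v : ι → (Fin N → ℂ)) (p : ι → Fin N)
    (hinj : Function.Injective p) (h0 : ∀ a, v a (p a) ≠ 0)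
    (hz : ∀ a b, p a < p b → v a (p b) = 0) : LinearIndependent ℂ v := by
  classical
  rw [linearIndependent_iff']
  intro s
  induction s using Finset.strongInduction with
  | _ s IH =>
    intro g hsum a ha
    have hsne : s.Nonempty := ⟨a, ha⟩
    obtain ⟨b, hb, hmax⟩ := s.exists_max_image p hsne
    have hgb : g b = 0 := by
      have hc := congrFun hsum (p b)
      rw [Finset.sum_apply] at hc
      rw [Finset.sum_eq_single b (fun x hx hxb => by
        have : p x < p b := lt_of_le_of_ne (hmax x hx) (fun he => hxb (hinj he))
        simp [hz x b this]) (fun hbs => absurd hb hbs)] at hc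
      simp only [Pi.smul_apply, smul_eq_mul, Pi.zero_apply] at hc
      exact (mul_eq_zero.mp hc).resolve_right (h0 b)
    rcases eq_or_ne a b with rfl | hab
    · exact hgb
    · refine IH (s.erase b) (Finset.erase_ssubset hb) g ?_ a (Finset.mem_erase.mpr ⟨hab, ha⟩)
      rw [Finset.sum_erase s (by rw [hgb, zero_smul])]
      exact hsum

lemma card_le_finrank {N : ℕ} (P : Submodule ℂ (Fin N → ℂ)) (S : Finset (Fin N))
    (v : Fin N → Fin N → ℂ) (p : Fin N → Fin N)
    (hmem : ∀ c ∈ S, v c ∈ P)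
    (hinj : Set.InjOn p S)
    (h0 : ∀ c ∈ S, v c (p c) ≠ 0)
    (hz : ∀ c ∈ S, ∀ c' ∈ S, p c < p c' → v c (p c') = 0) :
    S.card ≤ Module.finrank ℂ P := by
  have hli : LinearIndependent ℂ (fun c : ↥S => v c) :=
    indep_echelon _ (fun c : ↥S => p c)
      (fun a b hab => Subtype.ext (hinj a.2 b.2 hab))
      (fun a => h0 a a.2) (fun a b hab => hz a a.2 b b.2 hab)
  calc S.card = Fintype.card ↥S := (Fintype.card_coe S).symm
    _ = Module.finrank ℂ (Submodule.span ℂ (Set.range fun c : ↥S => v c)) :=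
        (finrank_span_eq_card hli).symm
    _ ≤ Module.finrank ℂ P := by
        apply Submodule.finrank_mono
        rw [Submodule.span_le]
        rintro _ ⟨c, rfl⟩
        exact hmem c c.2

section matrixFacts

lemma entry_le_pv (A : Matrix (Fin (m + 1)) (Fin (m + 1)) ℂ)
    (hA : ∀ i c, A i c ≠ 0 ↔ AwSupp w i c) {r c : Fin (m + 1)} (h : A r c ≠ 0) : (r : ℕ) ≤ pvN w (c : ℕ) := by
  rcases (hA r c).mp h with h2 | ⟨hrm, h1⟩
  · rw [h2, pv_star2]
  · rw [h1]
    exact Nat.le_of_lt (lt_pv_star1 w hrm)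

lemma pivot_entry (A : Matrix (Fin (m + 1)) (Fin (m + 1)) ℂ)
    (hA : ∀ i c, A i c ≠ 0 ↔ AwSupp w i c) (c : Fin (m + 1)) : A (rowOf w (c : ℕ)) c ≠ 0 :=
  (hA _ _).mpr (Or.inl (star2_rowOf' w c).symm)

lemma col_vanish (A : Matrix (Fin (m + 1)) (Fin (m + 1)) ℂ)
    (hA : ∀ i c, A i c ≠ 0 ↔ AwSupp w i c) {c r : Fin (m + 1)} (h : pvN w (c : ℕ) < (r : ℕ)) : A r c = 0 := by
  by_contra hne
  have := entry_le_pv w A hA hne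
  omega

lemma exists_clean_vec (A : Matrix (Fin (m + 1)) (Fin (m + 1)) ℂ)
    (hA : ∀ i c, A i c ≠ 0 ↔ AwSupp w i c) {i j : ℕ} (hjm : j ≤ m) (c : Fin (m + 1)) (hci : (c : ℕ) < i)
    (hcj : j ≤ pvN w (c : ℕ))
    (hmax : ∀ r : Fin (m + 1), (r : ℕ) < j → star1col w r < i → i ≤ (star2 w r : ℕ) →
      ce w j (star1col w r) ≠ (c : ℕ)) :
    ∃ v : Fin (m + 1) → ℂ, v ∈ colSpan A i ∧ v (rowOf w (c : ℕ)) ≠ 0 ∧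
      (∀ r : Fin (m + 1), (r : ℕ) < j → v r = 0) ∧
      (∀ r : Fin (m + 1), pvN w (c : ℕ) < (r : ℕ) → v r = 0) := by
  set Sgen : Set (Fin (m+1) → ℂ) :=
    {u | ∃ x : Fin (m+1), ((x : ℕ) < i ∧ ce w j (x : ℕ) = (c : ℕ)) ∧ u = fun r => A r x}
    with hSgen
  have hspan_le : Submodule.span ℂ Sgen ≤ colSpan A i := by
    apply Submodule.span_le.mpr
    rintro _ ⟨x, ⟨hxi, -⟩, rfl⟩
    exact Submodule.subset_span ⟨x, hxi, rfl⟩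
  have key : ∀ t : ℕ, ∃ v : Fin (m + 1) → ℂ, v ∈ Submodule.span ℂ Sgen ∧
      v (rowOf w (c : ℕ)) ≠ 0 ∧
      (∀ r : Fin (m + 1), j - t ≤ (r : ℕ) → (r : ℕ) < j → v r = 0) ∧
      (∀ r : Fin (m + 1), pvN w (c : ℕ) < (r : ℕ) → v r = 0) := by
    intro t
    induction t with
    | zero =>
      refine ⟨fun r => A r c, Submodule.subset_span ⟨c, ⟨hci, ce_self w hcj⟩, rfl⟩,
        pivot_entry w A hA c, ?_, ?_⟩
      · intro r h1 h2
        omega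
      · intro r hr
        exact col_vanish w A hA hr
    | succ t IHt =>
      obtain ⟨v, hvsp, hvnz, hvmid, hvtop⟩ := IHt
      rcases Nat.eq_zero_or_pos j with hj0 | hjpos
      · refine ⟨v, hvsp, hvnz, ?_, hvtop⟩
        intro r h1 h2
        omega
      set ρ : ℕ := j - (t + 1) with hρ
      have hρj : ρ < j := by omega
      have hρm : ρ < m := by omega
      set ρF : Fin (m + 1) := ⟨ρ, by omega⟩ with hρF
      have hρFv : (ρF : ℕ) = ρ := rfl
      by_cases hv0 : v ρF = 0
      · refine ⟨v, hvsp, hvnz, fun r h1 h2 => ?_, hvtop⟩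
        rcases Nat.lt_or_ge (r : ℕ) (j - t) with hlt | hge
        · have : r = ρF := Fin.ext (by rw [hρFv]; omega)
          rw [this]; exact hv0
        · exact hvmid r hge h2
      · -- extract a generator column with a nonzero entry in row ρ
        have hex : ∃ x : Fin (m+1), ((x : ℕ) < i ∧ ce w j (x : ℕ) = (c : ℕ)) ∧ A ρF x ≠ 0 := by
          have hind : ∀ u ∈ Submodule.span ℂ Sgen, u ρF ≠ 0 →
              ∃ x : Fin (m+1), ((x : ℕ) < i ∧ ce w j (x : ℕ) = (c : ℕ)) ∧ A ρF x ≠ 0 := by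
            intro u hu
            induction hu using Submodule.span_induction with
            | mem u hu =>
              obtain ⟨x, hx, rfl⟩ := hu
              exact fun hne => ⟨x, hx, hne⟩
            | zero => simp
            | add u₁ u₂ h₁ h₂ ih₁ ih₂ =>
              intro hne
              rcases eq_or_ne (u₁ ρF) 0 with h10 | h1n
              · exact ih₂ (by simpa [Pi.add_apply, h10] using hne)
              · exact ih₁ h1n
            | smul a u hu ih =>
              intro hne
              apply ih
              intro h0'
              rw [Pi.smul_apply, h0', smul_zero] at hne
              exact hne rfl
          exact hind v hvsp hv0
        obtain ⟨x, ⟨hxi, hxce⟩, hAx⟩ := hex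
        set y : Fin (m + 1) := star2 w ρF with hy
        have hpvy : pvN w (y : ℕ) = ρ := pv_star2 w ρF
        have hAy : A ρF y ≠ 0 := (hA _ _).mpr (Or.inl rfl)
        have hyi : (y : ℕ) < i ∧ ce w j (y : ℕ) = (c : ℕ) := by
          rcases (hA ρF x).mp hAx with h2 | ⟨hρm', h1⟩
          · rw [hy, ← h2]; exact ⟨hxi, hxce⟩
          · have hyi' : (y : ℕ) < i := by
              by_contra hcon
              push_neg at hcon
              refine hmax ρF hρj (by rw [← h1]; exact hxi) hcon ?_
              rw [← h1]; exact hxce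
            refine ⟨hyi', ?_⟩
            have h1y : 1 ≤ (y : ℕ) := star2_pos w hρm
            have hym : (y : ℕ) ≤ m := Nat.lt_succ_iff.mp y.isLt
            have hrec := ce_eq_rec w (j := j) (x := (y : ℕ)) ⟨h1y, hym, by rw [hpvy]; omega⟩
            rw [hrec, show rowOf w (y : ℕ) = ρF from Fin.ext (by rw [show ((rowOf w (y:ℕ)) : ℕ) = pvN w (y:ℕ) from rfl, hpvy]), ← h1, hxce]
        have hcolv : ∀ r : Fin (m + 1), ρ < (r : ℕ) → A r y = 0 := by
          intro r hr
          exact col_vanish w A hA (by rw [hpvy]; exact hr)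
        refine ⟨A ρF y • v - v ρF • (fun r => A r y), ?_, ?_, ?_, ?_⟩
        · exact Submodule.sub_mem _ (Submodule.smul_mem _ _ hvsp)
            (Submodule.smul_mem _ _ (Submodule.subset_span ⟨y, hyi, rfl⟩))
        · have hrowv : pvN w (c : ℕ) > ρ := by omega
          have : A (rowOf w (c : ℕ)) y = 0 := hcolv _ hrowv
          simp only [Pi.sub_apply, Pi.smul_apply, smul_eq_mul, this, mul_zero, sub_zero]
          exact mul_ne_zero hAy hvnz
        · intro r h1 h2
          rcases Nat.lt_or_ge (r : ℕ) (j - t) with hlt | hge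
          · have : r = ρF := Fin.ext (by rw [hρFv]; omega)
            rw [this]
            simp only [Pi.sub_apply, Pi.smul_apply, smul_eq_mul]
            ring
          · have hvr : v r = 0 := hvmid r hge h2
            rcases eq_or_ne r ρF with rfl | hne
            · exact absurd hvr hv0
            · have hne' : (r : ℕ) ≠ ρ := fun he => hne (Fin.ext (by rw [hρFv]; exact he))
              have hAr : A r y = 0 := by
                apply hcolv
                omega
              simp [hvr, hAr]
        · intro r hr
          have hvr : v r = 0 := hvtop r hr
          have hAr : A r y = 0 := hcolv r (by omega)
          simp [hvr, hAr]
  obtain ⟨v, hvsp, hvnz, hvmid, hvtop⟩ := key j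
  exact ⟨v, hspan_le hvsp, hvnz, fun r hr => hvmid r (by omega) hr, hvtop⟩

end matrixFacts

end Stmt17

namespace Stmt17
variable {m : ℕ} (w : Equiv.Perm (Fin m))

lemma mem_coordSub {n : ℕ} (S : Set (Fin n)) (v : Fin n → ℂ) :
    v ∈ coordSub n S ↔ ∀ k ∈ S, v k = 0 := by
  simp [coordSub, Submodule.mem_iInf]

lemma good_card_le (A : Matrix (Fin (m + 1)) (Fin (m + 1)) ℂ)
    (hA : ∀ i c, A i c ≠ 0 ↔ AwSupp w i c) {i j : ℕ} (hjm : j ≤ m) (S : Finset (Fin (m + 1)))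
    (hS : ∀ c ∈ S, (c : ℕ) < i ∧ j ≤ pvN w (c : ℕ))
    (hSmax : ∀ c ∈ S, ∀ r : Fin (m + 1), (r : ℕ) < j → star1col w r < i →
      i ≤ (star2 w r : ℕ) → ce w j (star1col w r) ≠ (c : ℕ)) :
    S.card ≤ Module.finrank ℂ
      ↥(colSpan A i ⊓ coordSub (m + 1) {k : Fin (m + 1) | (k : ℕ) < j}) := by
  classical
  have hex : ∀ c ∈ S, ∃ v : Fin (m + 1) → ℂ, v ∈ colSpan A i ∧ v (rowOf w (c : ℕ)) ≠ 0 ∧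
      (∀ r : Fin (m + 1), (r : ℕ) < j → v r = 0) ∧
      (∀ r : Fin (m + 1), pvN w (c : ℕ) < (r : ℕ) → v r = 0) :=
    fun c hc => exists_clean_vec w A hA hjm c (hS c hc).1 (hS c hc).2 (hSmax c hc)
  set vv : Fin (m + 1) → (Fin (m + 1) → ℂ) :=
    fun c => if h : c ∈ S then (hex c h).choose else 0 with hvv
  apply card_le_finrank _ S vv (fun c => rowOf w (c : ℕ))
  · intro c hc
    obtain ⟨h1, h2, h3, h4⟩ := (hex c hc).choose_spec
    rw [Submodule.mem_inf]
    constructor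
    · simpa only [hvv, dif_pos hc] using h1
    · rw [mem_coordSub]
      intro k hk
      simp only [hvv, dif_pos hc]
      exact h3 k hk
  · intro c hc c' hc' he
    exact pv_inj w (congrArg Fin.val he)
  · intro c hc
    obtain ⟨h1, h2, h3, h4⟩ := (hex c hc).choose_spec
    simpa only [hvv, dif_pos hc] using h2
  · intro c hc c' hc' hlt
    obtain ⟨h1, h2, h3, h4⟩ := (hex c hc).choose_spec
    simp only [hvv, dif_pos hc]
    exact h4 _ hlt

lemma col2_card_le (A : Matrix (Fin (m + 1)) (Fin (m + 1)) ℂ)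
    (hA : ∀ i c, A i c ≠ 0 ↔ AwSupp w i c) {i j : ℕ} (S : Finset (Fin (m + 1)))
    (hS : ∀ c ∈ S, (c : ℕ) < i ∧ pvN w (c : ℕ) + j ≤ m) :
    S.card ≤ Module.finrank ℂ
      ↥(colSpan A i ⊓ coordSub (m + 1) {k : Fin (m + 1) | m + 1 ≤ (k : ℕ) + j}) := by
  apply card_le_finrank _ S (fun c r => A r c) (fun c => rowOf w (c : ℕ))
  · intro c hc
    rw [Submodule.mem_inf]
    constructor
    · exact Submodule.subset_span ⟨c, (hS c hc).1, rfl⟩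
    · rw [mem_coordSub]
      intro k hk
      by_contra hne
      have h1 := entry_le_pv w A hA hne
      have h2 := (hS c hc).2
      simp only [Set.mem_setOf_eq] at hk
      omega
  · intro c hc c' hc' he
    exact pv_inj w (congrArg Fin.val he)
  · intro c hc
    exact pivot_entry w A hA c
  · intro c hc c' hc' hlt
    exact col_vanish w A hA hlt

end Stmt17

open Stmt17 in
/-- Schubert containment of the special orbit: the flag of column spans of `A_w`
satisfies the Schubert conditions with respect to the two coordinate flags.
(All indices `i`, `j` are 1-based as in the paper; `n = m + 1`, `w ∈ S_{n-1}`.) -/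
theorem stmt17 (m : ℕ) (w : Equiv.Perm (Fin m))
    (A : Matrix (Fin (m + 1)) (Fin (m + 1)) ℂ)
    (hA : ∀ i c, A i c ≠ 0 ↔ AwSupp w i c)
    (i j : ℕ) (hi : i ≤ m + 1) (hj : j ≤ m + 1) :
    (Finset.univ.filter (fun k : Fin m => (k : ℕ) < i ∧ j ≤ (w k : ℕ))).card ≤
      Module.finrank ℂ ↥(colSpan A i ⊓ coordSub (m + 1) {k | (k : ℕ) < j}) ∧
    (Finset.univ.filter (fun k : Fin m => (k : ℕ) + 2 ≤ i ∧ (w k : ℕ) + j ≤ m)).card ≤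
      Module.finrank ℂ ↥(colSpan A i ⊓ coordSub (m + 1) {k | m + 1 ≤ (k : ℕ) + j}) := by
  classical
  constructor
  · -- first Schubert condition
    by_cases hN : (Finset.univ.filter (fun k : Fin m => (k : ℕ) < i ∧ j ≤ (w k : ℕ))).card = 0
    · rw [hN]; exact Nat.zero_le _
    obtain ⟨k₀, hk₀⟩ := Finset.card_pos.mp (Nat.pos_of_ne_zero hN)
    rw [Finset.mem_filter] at hk₀
    have hk₀i : (k₀ : ℕ) < i := hk₀.2.1
    have hk₀j : j ≤ (w k₀ : ℕ) := hk₀.2.2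
    have hjm' : j < m := lt_of_le_of_lt hk₀j (w k₀).isLt
    have hjm : j ≤ m := le_of_lt hjm'
    have hi1 : 1 ≤ i := by omega
    set CF : Finset (Fin (m + 1)) :=
      Finset.univ.filter (fun c => (c : ℕ) < i ∧ j ≤ pvN w (c : ℕ)) with hCFdef
    have hmemCF : ∀ c : Fin (m + 1), c ∈ CF ↔ ((c : ℕ) < i ∧ j ≤ pvN w (c : ℕ)) := by
      intro c; simp [hCFdef]
    have h0CF : (⟨0, by omega⟩ : Fin (m + 1)) ∈ CF := by
      rw [hmemCF]
      refine ⟨hi1, ?_⟩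
      rw [show ((⟨0, by omega⟩ : Fin (m + 1)) : ℕ) = 0 from rfl, pvN_zero]
      exact hjm
    set ψ : Fin m → Fin (m + 1) := fun k => ⟨(k : ℕ) + 1, by omega⟩ with hψdef
    have hψval : ∀ k : Fin m, ((ψ k : Fin (m + 1)) : ℕ) = (k : ℕ) + 1 := fun k => rfl
    have hψCF : ∀ k : Fin m, (k : ℕ) + 1 < i → j ≤ (w k : ℕ) → ψ k ∈ CF := by
      intro k h1 h2
      rw [hmemCF, hψval, pvN_succ]
      exact ⟨h1, h2⟩
    have hψinj : Set.InjOn ψ ↑(Finset.univ.filter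
        (fun k : Fin m => (k : ℕ) < i ∧ j ≤ (w k : ℕ))) := by
      intro a ha b hb he
      have : (a : ℕ) + 1 = (b : ℕ) + 1 := by
        rw [← hψval a, ← hψval b, he]
      exact Fin.ext (by omega)
    by_cases hU : ∃ r : Fin (m + 1), (r : ℕ) < j ∧ star1col w r < i ∧ i ≤ (star2 w r : ℕ)
    · obtain ⟨ru, hru1, hru2, hru3⟩ := hU
      have hrum : (ru : ℕ) < m := by omega
      have hdom : ∀ rr : Fin (m + 1), (rr : ℕ) < j → star1col w rr < i →
          i ≤ (star2 w rr : ℕ) → ∀ c ∈ CF, (c : ℕ) ≤ ce w j (star1col w rr) := by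
        intro rr h1 h2 h3 c hc
        rw [hmemCF] at hc
        have hrm : (rr : ℕ) < m := by omega
        have hcs1 : (c : ℕ) ≤ star1col w rr := by
          by_contra hcon
          push_neg at hcon
          have := star1_max w hrm hcon (by omega)
          omega
        have hs1m : star1col w rr ≤ m := by
          have h4 := star1_lt w hrm
          have h5 := (star2 w rr).isLt
          omega
        exact ce_dominates w _ hs1m _ hc.2 hcs1
      have hendCF : ∀ rr : Fin (m + 1), (rr : ℕ) < j → star1col w rr < i →
          i ≤ (star2 w rr : ℕ) →
          ∃ cF : Fin (m + 1), cF ∈ CF ∧ (cF : ℕ) = ce w j (star1col w rr) := by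
        intro rr h1 h2 h3
        have hrm : (rr : ℕ) < m := by omega
        have hs1m : star1col w rr ≤ m := by
          have h4 := star1_lt w hrm
          have h5 := (star2 w rr).isLt
          omega
        have hle : ce w j (star1col w rr) ≤ star1col w rr := ce_le w _
        refine ⟨⟨ce w j (star1col w rr), by omega⟩, ?_, rfl⟩
        rw [hmemCF]
        exact ⟨show ce w j (star1col w rr) < i by omega, ce_pv w hjm _ hs1m⟩
      obtain ⟨cstarF, hcstarCF, hcstarval⟩ := hendCF ru hru1 hru2 hru3
      set S : Finset (Fin (m + 1)) := CF.erase cstarF with hSdef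
      have hSmax : ∀ c ∈ S, ∀ r : Fin (m + 1), (r : ℕ) < j → star1col w r < i →
          i ≤ (star2 w r : ℕ) → ce w j (star1col w r) ≠ (c : ℕ) := by
        intro c hc r h1 h2 h3 hce
        have hcE := Finset.mem_erase.mp hc
        have hup := hdom r h1 h2 h3 cstarF hcstarCF
        have hdn := hdom ru hru1 hru2 hru3 c hcE.2
        have : (c : ℕ) = (cstarF : ℕ) := by omega
        exact hcE.1 (Fin.ext this)
      have hfin := good_card_le w A hA hjm S
        (fun c hc => (hmemCF c).mp (Finset.mem_erase.mp hc).2) hSmax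
      have hdelta : ∀ k : Fin m, (k : ℕ) < i → j ≤ (w k : ℕ) → (k : ℕ) + 1 < i := by
        intro k h1 h2
        by_contra hcon
        push_neg at hcon
        have hki : (k : ℕ) + 1 = i := by omega
        rcases eq_or_lt_of_le hru3 with heq | hlt
        · have hpv : pvN w ((star2 w ru : Fin (m + 1)) : ℕ) = (ru : ℕ) := pv_star2 w ru
          rw [← heq, ← hki, pvN_succ] at hpv
          omega
        · have := star1_max w hrum (show star1col w ru < (k : ℕ) + 1 by omega)
            (show (k : ℕ) + 1 < (star2 w ru : ℕ) by omega)
          rw [pvN_succ] at this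
          omega
      have hCFeq : CF = insert (⟨0, by omega⟩ : Fin (m + 1))
          ((Finset.univ.filter (fun k : Fin m => (k : ℕ) < i ∧ j ≤ (w k : ℕ))).image ψ) := by
        apply Finset.ext
        intro c
        rw [Finset.mem_insert, hmemCF]
        simp only [Finset.mem_image, Finset.mem_filter, Finset.mem_univ, true_and]
        constructor
        · rintro ⟨hci, hcj⟩
          rcases Nat.eq_zero_or_pos (c : ℕ) with h0 | h1
          · exact Or.inl (Fin.ext h0)
          · right
            have hcm : (c : ℕ) ≤ m := Nat.lt_succ_iff.mp c.isLt
            have hc1m : (c : ℕ) - 1 < m := by omega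
            refine ⟨⟨(c : ℕ) - 1, hc1m⟩, ⟨show (c : ℕ) - 1 < i by omega, ?_⟩, ?_⟩
            · have := pvN_succ w ⟨(c : ℕ) - 1, hc1m⟩
              rw [show ((⟨(c : ℕ) - 1, hc1m⟩ : Fin m) : ℕ) + 1 = (c : ℕ) by simp; omega] at this
              omega
            · exact Fin.ext (by rw [hψval]; simp; omega)
        · rintro (rfl | ⟨k, ⟨hk1, hk2⟩, rfl⟩)
          · exact ⟨hi1, by rw [show ((⟨0, by omega⟩ : Fin (m + 1)) : ℕ) = 0 from rfl, pvN_zero]; exact hjm⟩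
          · rw [hψval, pvN_succ]
            exact ⟨hdelta k hk1 hk2, hk2⟩
      have h0notim : (⟨0, by omega⟩ : Fin (m + 1)) ∉
          ((Finset.univ.filter (fun k : Fin m => (k : ℕ) < i ∧ j ≤ (w k : ℕ))).image ψ) := by
        rw [Finset.mem_image]
        rintro ⟨k, -, hk⟩
        have h : (k : ℕ) + 1 = 0 := by
          have h2 := congrArg Fin.val hk
          rwa [hψval] at h2
        omega
      have hcardCF : CF.card =
          (Finset.univ.filter (fun k : Fin m => (k : ℕ) < i ∧ j ≤ (w k : ℕ))).card + 1 := by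
        rw [hCFeq, Finset.card_insert_of_notMem h0notim, Finset.card_image_of_injOn hψinj]
      have hScard : S.card = CF.card - 1 := Finset.card_erase_of_mem hcstarCF
      omega
    · have hSmax : ∀ c ∈ CF, ∀ r : Fin (m + 1), (r : ℕ) < j → star1col w r < i →
          i ≤ (star2 w r : ℕ) → ce w j (star1col w r) ≠ (c : ℕ) := by
        intro c hc r h1 h2 h3 hce
        exact hU ⟨r, h1, h2, h3⟩
      have hfin := good_card_le w A hA hjm CF (fun c hc => (hmemCF c).mp hc) hSmax
      have hcard : (Finset.univ.filter (fun k : Fin m => (k : ℕ) < i ∧ j ≤ (w k : ℕ))).card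
          ≤ CF.card := by
        apply Finset.card_le_card_of_injOn
          (fun k : Fin m => if h : (k : ℕ) + 1 < i then ψ k else ⟨0, by omega⟩)
        · intro k hk
          rw [Finset.mem_coe, Finset.mem_filter] at hk
          simp only [Finset.mem_coe]
          by_cases h : (k : ℕ) + 1 < i
          · rw [dif_pos h]; exact hψCF k h hk.2.2
          · rw [dif_neg h]; exact h0CF
        · intro a ha b hb he
          rw [Finset.mem_coe, Finset.mem_filter] at ha hb
          dsimp only at he
          by_cases h1 : (a : ℕ) + 1 < i <;> by_cases h2 : (b : ℕ) + 1 < i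
          · rw [dif_pos h1, dif_pos h2] at he
            have : (a : ℕ) + 1 = (b : ℕ) + 1 := by rw [← hψval a, ← hψval b, he]
            exact Fin.ext (by omega)
          · rw [dif_pos h1, dif_neg h2] at he
            have := hψval a
            rw [he] at this
            simp at this
          · rw [dif_neg h1, dif_pos h2] at he
            have := hψval b
            rw [← he] at this
            simp at this
          · exact Fin.ext (by omega)
      exact le_trans hcard hfin
  · -- second Schubert condition
    set S2 : Finset (Fin (m + 1)) := Finset.univ.filter
      (fun c => (c : ℕ) < i ∧ 1 ≤ (c : ℕ) ∧ pvN w (c : ℕ) + j ≤ m) with hS2def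
    have hfin := col2_card_le w A hA (i := i) (j := j) S2 (by
      intro c hc
      rw [hS2def, Finset.mem_filter] at hc
      exact ⟨hc.2.1, hc.2.2.2⟩)
    refine le_trans ?_ hfin
    apply Finset.card_le_card_of_injOn (fun k => ⟨(k : ℕ) + 1, by omega⟩)
    · intro k hk
      rw [Finset.mem_coe, Finset.mem_filter] at hk
      rw [Finset.mem_coe, hS2def, Finset.mem_filter]
      refine ⟨Finset.mem_univ _, ?_⟩
      rw [show ((⟨(k : ℕ) + 1, by omega⟩ : Fin (m + 1)) : ℕ) = (k : ℕ) + 1 from rfl, pvN_succ]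
      exact ⟨by omega, by omega, hk.2.2⟩
    · intro a ha b hb he
      have : (a : ℕ) + 1 = (b : ℕ) + 1 := by
        have := congrArg Fin.val he
        simpa using this
      exact Fin.ext (by omega)
end

section
/- For every x ∈ GZ(λ), the vector Φ(x) = (y_0 - y_1, ..., y_{n-2} - y_{n-1}, y_{n-1}), with y_j = Σ_{i=1}^{n-j} x_{i,i+j}, lies in the weighted permutohedron Perm(λ); in particular, the map Φ maps each face GZ(λ, w) into Perm(λ). -/
/-- `y_j = x_{1,1+j} + x_{2,2+j} + ⋯ + x_{n-j,n}` (1-based), the sum of the `j`-th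
diagonal of the Gelfand-Zetlin pattern. -/
noncomputable def GZy {m : ℕ} (lam : Fin (m + 1) → ℝ) (x : GZIdx (m + 1) → ℝ)
    (j : ℕ) : ℝ :=
  ∑ i ∈ Finset.Icc 1 (m + 1 - j), GZX lam x i (i + j)

/-- The map `Φ(x) = (y_0 - y_1, …, y_{n-2} - y_{n-1}, y_{n-1})` (note `y_n = 0`). -/
noncomputable def Phi {m : ℕ} (lam : Fin (m + 1) → ℝ) (x : GZIdx (m + 1) → ℝ) :
    Fin (m + 1) → ℝ :=
  fun k => GZy lam x k - GZy lam x ((k : ℕ) + 1)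

/-- The weighted permutohedron: convex hull of the permuted weight vectors. -/
def PermHull (n : ℕ) (lam : Fin n → ℝ) : Set (Fin n → ℝ) :=
  convexHull ℝ {z | ∃ σ : Equiv.Perm (Fin n), z = lam ∘ σ}



open Finset

/-- The `j`-th diagonal sum of a triangular pattern. -/
noncomputable def Yd (P : ℕ → ℕ → ℝ) (n j : ℕ) : ℝ :=
  ∑ i ∈ Finset.Icc 1 (n - j), P i (i + j)

/-- Key combinatorial lemma: subset sums of the differences of consecutive
diagonal sums are bounded by partial sums of the top row. -/
lemma lemA : ∀ (n : ℕ) (P : ℕ → ℕ → ℝ),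
    (∀ i j : ℕ, 1 ≤ i → i ≤ j → j + 1 ≤ n →
      P i (j + 1) ≤ P i j ∧ P (i + 1) (j + 1) ≤ P i (j + 1)) →
    ∀ S : Finset ℕ, S ⊆ Finset.range n →
    ∑ k ∈ S, (Yd P n k - Yd P n (k + 1)) ≤ ∑ t ∈ Finset.range S.card, P (t + 1) (t + 1) := by
  intro n
  induction n with
  | zero =>
    intro P hP S hS
    have : S = ∅ := subset_empty.mp (by simpa using hS)
    simp [this]
  | succ N IH =>
    intro P hP S hS
    set P' : ℕ → ℕ → ℝ := fun i j => P i (j + 1) with hP'def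
    have hPint : ∀ i j : ℕ, 1 ≤ i → i ≤ j → j + 1 ≤ N →
        P' i (j + 1) ≤ P' i j ∧ P' (i + 1) (j + 1) ≤ P' i (j + 1) := by
      intro i j h1 h2 h3
      exact ⟨(hP i (j + 1) h1 (by omega) (by omega)).1,
             (hP i (j + 1) h1 (by omega) (by omega)).2⟩
    have hY' : ∀ j, Yd P' N j = Yd P (N + 1) (j + 1) := by
      intro j
      have h : N + 1 - (j + 1) = N - j := by omega
      rw [Yd, Yd, h]
      exact Finset.sum_congr rfl (fun i _ => rfl)
    -- top row and first subdiagonal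
    set lamr : ℕ → ℝ := fun t => P (t + 1) (t + 1) with hlamr
    set mur : ℕ → ℝ := fun t => P (t + 1) (t + 2) with hmur
    have f1 : ∀ t : ℕ, t + 1 ≤ N → lamr (t + 1) ≤ mur t := by
      intro t ht
      exact (hP (t + 1) (t + 1) (by omega) le_rfl (by omega)).2
    have f2 : ∀ t : ℕ, t + 1 ≤ N → mur t ≤ lamr t := by
      intro t ht
      exact (hP (t + 1) (t + 1) (by omega) le_rfl (by omega)).1
    have fy0 : Yd P (N + 1) 0 = ∑ t ∈ Finset.range (N + 1), lamr t := by
      rw [Yd]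
      have h : Finset.Icc 1 (N + 1 - 0) = Finset.Ico 1 (N + 2) := by
        rw [show N + 2 = N + 1 + 1 from rfl, Finset.Ico_add_one_right_eq_Icc]
        norm_num
      rw [h, Finset.sum_Ico_eq_sum_range]
      refine Finset.sum_congr (by norm_num) (fun t _ => ?_)
      show P (1 + t) (1 + t + 0) = P (t + 1) (t + 1)
      rw [Nat.add_comm 1 t]
    have fy1 : Yd P (N + 1) 1 = ∑ t ∈ Finset.range N, mur t := by
      rw [Yd]
      have h : Finset.Icc 1 (N + 1 - 1) = Finset.Ico 1 (N + 1) := by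
        rw [Finset.Ico_add_one_right_eq_Icc]
        congr 1
      rw [h, Finset.sum_Ico_eq_sum_range]
      refine Finset.sum_congr (by norm_num) (fun t _ => ?_)
      show P (1 + t) (1 + t + 1) = P (t + 1) (t + 2)
      rw [Nat.add_comm 1 t]
    by_cases h0 : 0 ∈ S
    · -- case 0 ∈ S
      set S0 := S.erase 0 with hS0
      have hge1 : ∀ k ∈ S0, 1 ≤ k := by
        intro k hk
        have := Finset.ne_of_mem_erase hk
        omega
      set S' := S0.image (· - 1) with hS'
      have hinj : Set.InjOn (· - 1) S0 := by
        intro a ha b hb hab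
        have := hge1 a ha; have := hge1 b hb
        simp only at hab
        omega
      have hcard' : S'.card = S.card - 1 := by
        rw [hS', Finset.card_image_of_injOn hinj, Finset.card_erase_of_mem h0]
      have hsub' : S' ⊆ Finset.range N := by
        intro t ht
        rw [hS'] at ht
        obtain ⟨k, hk, rfl⟩ := Finset.mem_image.mp ht
        have h1 := hge1 k hk
        have h2 := hS (Finset.mem_of_mem_erase hk)
        rw [Finset.mem_range] at h2 ⊢
        omega
      have hsum0 : ∑ k ∈ S, (Yd P (N+1) k - Yd P (N+1) (k+1))
          = (Yd P (N+1) 0 - Yd P (N+1) 1)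
            + ∑ t ∈ S', (Yd P' N t - Yd P' N (t+1)) := by
        rw [← Finset.add_sum_erase _ _ h0]
        congr 1
        rw [hS', Finset.sum_image hinj]
        refine Finset.sum_congr rfl (fun k hk => ?_)
        have h1 := hge1 k hk
        rw [hY', hY']
        congr 2 <;> omega
      have hIH := IH P' hPint S' hsub'
      have hcardle : S.card ≤ N + 1 := by
        simpa using Finset.card_le_card hS
      have hcard1 : 1 ≤ S.card := Finset.card_pos.mpr ⟨0, h0⟩
      rw [hsum0, fy0, fy1]
      rw [hcard'] at hIH
      have hmid : ∑ t ∈ Finset.range (S.card - 1), mur t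
          = ∑ t ∈ Finset.range N, mur t - ∑ t ∈ Finset.Ico (S.card - 1) N, mur t := by
        rw [Finset.sum_Ico_eq_sub _ (by omega)]
        ring
      have hlow : ∑ t ∈ Finset.Ico (S.card - 1) N, lamr (t + 1)
          ≤ ∑ t ∈ Finset.Ico (S.card - 1) N, mur t := by
        refine Finset.sum_le_sum (fun t ht => ?_)
        have := (Finset.mem_Ico.mp ht).2
        exact f1 t (by omega)
      have hshift : ∑ t ∈ Finset.Ico (S.card - 1) N, lamr (t + 1)
          = ∑ t ∈ Finset.Ico S.card (N + 1), lamr t := by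
        rw [Finset.sum_Ico_eq_sum_range, Finset.sum_Ico_eq_sum_range]
        refine Finset.sum_congr (by congr 1; omega) (fun t _ => ?_)
        congr 1
        omega
      have hsplit : ∑ t ∈ Finset.Ico S.card (N + 1), lamr t
          = ∑ t ∈ Finset.range (N + 1), lamr t - ∑ t ∈ Finset.range S.card, lamr t := by
        rw [Finset.sum_Ico_eq_sub _ hcardle]
      linarith
    · -- case 0 ∉ S
      have hge1 : ∀ k ∈ S, 1 ≤ k := by
        intro k hk
        rcases Nat.eq_zero_or_pos k with h | h
        · exact absurd (h ▸ hk) h0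
        · exact h
      set S' := S.image (· - 1) with hS'
      have hinj : Set.InjOn (· - 1) S := by
        intro a ha b hb hab
        have := hge1 a ha; have := hge1 b hb
        simp only at hab
        omega
      have hcard' : S'.card = S.card := by
        rw [hS', Finset.card_image_of_injOn hinj]
      have hsub' : S' ⊆ Finset.range N := by
        intro t ht
        obtain ⟨k, hk, rfl⟩ := Finset.mem_image.mp ht
        have h1 := hge1 k hk
        have h2 := hS hk
        rw [Finset.mem_range] at h2 ⊢
        omega
      have hsum0 : ∑ k ∈ S, (Yd P (N+1) k - Yd P (N+1) (k+1))
          = ∑ t ∈ S', (Yd P' N t - Yd P' N (t+1)) := by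
        rw [hS', Finset.sum_image hinj]
        refine Finset.sum_congr rfl (fun k hk => ?_)
        have h1 := hge1 k hk
        rw [hY', hY']
        congr 2 <;> omega
      have hIH := IH P' hPint S' hsub'
      rw [hcard'] at hIH
      rw [hsum0]
      refine hIH.trans (Finset.sum_le_sum (fun t ht => ?_))
      have h1 : t < S.card := Finset.mem_range.mp ht
      have h2 : S.card ≤ N := by
        rw [← hcard']
        simpa using Finset.card_le_card hsub'
      exact f2 t (by omega)



/-- Prefix sum of the first `p` coordinates. -/
noncomputable def pSum {n : ℕ} (f : Fin n → ℝ) (p : ℕ) : ℝ :=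
  ∑ i ∈ Finset.univ.filter (fun i : Fin n => (i : ℕ) < p), f i

lemma pSum_succ {n : ℕ} (f : Fin n → ℝ) (a : Fin n) :
    pSum f ((a : ℕ) + 1) = pSum f (a : ℕ) + f a := by
  rw [pSum, pSum]
  have h : Finset.univ.filter (fun i : Fin n => (i : ℕ) < (a : ℕ) + 1)
      = insert a (Finset.univ.filter (fun i : Fin n => (i : ℕ) < (a : ℕ))) := by
    ext i
    simp [Fin.ext_iff]
    omega
  rw [h, Finset.sum_insert (by simp)]
  ring

/-- Hardy–Littlewood–Pólya, sorted form. -/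
lemma hlp_core (n : ℕ) (z : Fin n → ℝ) (hz : ∀ i j : Fin n, i ≤ j → z j ≤ z i) :
    ∀ (d : ℕ) (lam : Fin n → ℝ),
      (Finset.univ.filter (fun i => z i ≠ lam i)).card = d →
      (∀ i j : Fin n, i ≤ j → lam j ≤ lam i) →
      (∀ p : ℕ, pSum z p ≤ pSum lam p) →
      (∑ i, z i = ∑ i, lam i) →
      z ∈ convexHull ℝ {v : Fin n → ℝ | ∃ σ : Equiv.Perm (Fin n), v = lam ∘ σ} := by
  intro d
  induction d using Nat.strong_induction_on with
  | _ d IH =>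
    intro lam hcard hl hpre hsum
    rcases Nat.eq_zero_or_pos d with hd0 | hdpos
    · -- base: z = lam
      have hz_eq : ∀ i, z i = lam i := by
        intro i
        by_contra h
        have hmem : i ∈ Finset.univ.filter (fun i => z i ≠ lam i) := by simp [h]
        have hempty : Finset.univ.filter (fun i => z i ≠ lam i) = ∅ :=
          Finset.card_eq_zero.mp (by omega)
        rw [hempty] at hmem
        simp at hmem
      exact subset_convexHull ℝ _ ⟨1, by funext i; simpa using hz_eq i⟩
    · -- there is an index where lam < z
      have hKne : (Finset.univ.filter (fun i => lam i < z i)).Nonempty := by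
        by_contra hKe
        rw [Finset.not_nonempty_iff_eq_empty] at hKe
        have hle : ∀ i : Fin n, z i ≤ lam i := by
          intro i
          by_contra h
          have hmem : i ∈ Finset.univ.filter (fun i => lam i < z i) := by
            simp [lt_of_not_ge h]
          rw [hKe] at hmem
          simp at hmem
        have hne : ∃ i : Fin n, z i ≠ lam i := by
          have h1 : (Finset.univ.filter (fun i => z i ≠ lam i)).Nonempty :=
            Finset.card_pos.mp (by omega)
          obtain ⟨i, hi⟩ := h1
          exact ⟨i, (Finset.mem_filter.mp hi).2⟩
        obtain ⟨i0, hi0⟩ := hne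
        have hlt : ∑ i, z i < ∑ i, lam i :=
          Finset.sum_lt_sum (fun i _ => hle i)
            ⟨i0, Finset.mem_univ i0, lt_of_le_of_ne (hle i0) hi0⟩
        linarith
      set k := (Finset.univ.filter (fun i => lam i < z i)).min' hKne with hkdef
      have hzk : lam k < z k := by
        have := Finset.min'_mem _ hKne
        exact (Finset.mem_filter.mp this).2
      have hk_min : ∀ i : Fin n, lam i < z i → k ≤ i := by
        intro i hi
        exact Finset.min'_le _ _ (by simp [hi])
      -- J nonempty
      have hJne : (Finset.univ.filter (fun i : Fin n => i < k ∧ z i < lam i)).Nonempty := by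
        by_contra hJe
        rw [Finset.not_nonempty_iff_eq_empty] at hJe
        have heqk : ∀ i : Fin n, i < k → z i = lam i := by
          intro i hi
          have hA : ¬ z i < lam i := by
            intro h
            have hmem : i ∈ Finset.univ.filter (fun i : Fin n => i < k ∧ z i < lam i) := by
              simp [hi, h]
            rw [hJe] at hmem; simp at hmem
          have hB : ¬ lam i < z i := fun h => absurd (hk_min i h) (not_le.mpr hi)
          exact le_antisymm (not_lt.mp hB) (not_lt.mp hA)
        have h1 : pSum z (k : ℕ) = pSum lam (k : ℕ) := by
          refine Finset.sum_congr rfl (fun i hi => ?_)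
          have : (i : ℕ) < (k : ℕ) := by simpa using hi
          exact heqk i this
        have h2 := hpre ((k : ℕ) + 1)
        rw [pSum_succ z k, pSum_succ lam k, h1] at h2
        linarith
      set j := (Finset.univ.filter (fun i : Fin n => i < k ∧ z i < lam i)).max' hJne with hjdef
      have hj_mem : j < k ∧ z j < lam j := by
        have := Finset.max'_mem _ hJne
        exact (Finset.mem_filter.mp this).2
      obtain ⟨hjk, hzj⟩ := hj_mem
      have hj_max : ∀ i : Fin n, i < k → z i < lam i → i ≤ j := by
        intro i h1 h2
        exact Finset.le_max' _ _ (by simp [h1, h2])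
      have heq_mid : ∀ i : Fin n, j < i → i < k → z i = lam i := by
        intro i h1 h2
        have hA : ¬ z i < lam i := fun h => absurd (hj_max i h2 h) (not_le.mpr h1)
        have hB : ¬ lam i < z i := fun h => absurd (hk_min i h) (not_le.mpr h2)
        exact le_antisymm (not_lt.mp hB) (not_lt.mp hA)
      have hzjk : z k ≤ z j := hz j k (le_of_lt hjk)
      have hlamjk : lam k < lam j := by linarith
      set δ : ℝ := min (lam j - z j) (z k - lam k) with hδdef
      have hδ1 : δ ≤ lam j - z j := min_le_left _ _
      have hδ2 : δ ≤ z k - lam k := min_le_right _ _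
      have hδpos : 0 < δ := lt_min (by linarith) (by linarith)
      have hδle : δ ≤ lam j - lam k := by linarith
      set θ : ℝ := δ / (lam j - lam k) with hθdef
      have hθ0 : 0 ≤ θ := div_nonneg hδpos.le (by linarith)
      have hθ1 : θ ≤ 1 := (div_le_one (by linarith)).mpr hδle
      have hθδ : θ * (lam j - lam k) = δ := div_mul_cancel₀ _ (by linarith)
      have hjk_ne : j ≠ k := ne_of_lt hjk
      set lam' : Fin n → ℝ :=
        fun i => lam i + (if i = k then δ else 0) - (if i = j then δ else 0) with hlam'def
      have hval : ∀ i : Fin n,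
          lam' i = if i = j then lam j - δ else if i = k then lam k + δ else lam i := by
        intro i
        by_cases h1 : i = j
        · subst h1; simp [hlam'def, hjk_ne]
        · by_cases h2 : i = k
          · subst h2; simp [hlam'def, Ne.symm hjk_ne, h1]
          · simp [hlam'def, h1, h2]
      have hb1 : z j ≤ lam j - δ := by linarith
      have hb2 : lam k + δ ≤ z k := by linarith
      -- pointwise combo identity
      have hpw : ∀ a : Fin n,
          lam' a = (1 - θ) * lam a + θ * lam (Equiv.swap j k a) := by
        intro a
        by_cases haj : a = j
        · subst haj
          rw [hval, if_pos rfl, Equiv.swap_apply_left]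
          linear_combination hθδ
        · by_cases hak : a = k
          · subst hak
            rw [hval, if_neg haj, if_pos rfl, Equiv.swap_apply_right]
            linear_combination -hθδ
          · rw [hval, if_neg haj, if_neg hak, Equiv.swap_apply_of_ne_of_ne haj hak]
            ring
      -- the hull of lam'-permutations is inside the hull of lam-permutations
      have hincl : {v : Fin n → ℝ | ∃ σ : Equiv.Perm (Fin n), v = lam' ∘ σ} ⊆
          convexHull ℝ {v : Fin n → ℝ | ∃ σ : Equiv.Perm (Fin n), v = lam ∘ σ} := by
        rintro v ⟨σ, rfl⟩
        have h1 : (lam ∘ σ : Fin n → ℝ) ∈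
            convexHull ℝ {v : Fin n → ℝ | ∃ σ : Equiv.Perm (Fin n), v = lam ∘ σ} :=
          subset_convexHull ℝ _ ⟨σ, rfl⟩
        have h2 : (lam ∘ ⇑(σ.trans (Equiv.swap j k)) : Fin n → ℝ) ∈
            convexHull ℝ {v : Fin n → ℝ | ∃ σ : Equiv.Perm (Fin n), v = lam ∘ σ} :=
          subset_convexHull ℝ _ ⟨σ.trans (Equiv.swap j k), rfl⟩
        have hcvx := convex_convexHull ℝ
          {v : Fin n → ℝ | ∃ σ : Equiv.Perm (Fin n), v = lam ∘ σ}
        have hmem := hcvx h1 h2 (by linarith : (0:ℝ) ≤ 1 - θ) hθ0 (by ring)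
        have heq : (1 - θ) • (lam ∘ σ) + θ • (lam ∘ ⇑(σ.trans (Equiv.swap j k)))
            = lam' ∘ σ := by
          funext a
          simp only [Pi.add_apply, Pi.smul_apply, smul_eq_mul, Function.comp_apply,
            Equiv.trans_apply]
          exact (hpw (σ a)).symm
        rw [heq] at hmem
        exact hmem
      -- the difference set shrinks
      have hsubD : Finset.univ.filter (fun i => z i ≠ lam' i)
          ⊆ Finset.univ.filter (fun i => z i ≠ lam i) := by
        intro i hi
        simp only [Finset.mem_filter, Finset.mem_univ, true_and] at hi ⊢
        by_cases hij : i = j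
        · subst hij; exact ne_of_lt hzj
        · by_cases hik : i = k
          · subst hik; exact ne_of_gt hzk
          · have hlam'i : lam' i = lam i := by rw [hval, if_neg hij, if_neg hik]
            rwa [hlam'i] at hi
      have hltcard : (Finset.univ.filter (fun i => z i ≠ lam' i)).card < d := by
        rw [← hcard]
        apply Finset.card_lt_card
        rw [Finset.ssubset_iff_of_subset hsubD]
        rcases le_total (lam j - z j) (z k - lam k) with hmin | hmin
        · refine ⟨j, by simp [ne_of_lt hzj], ?_⟩
          simp only [Finset.mem_filter, Finset.mem_univ, true_and, not_not]
          rw [hval, if_pos rfl, hδdef, min_eq_left hmin]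
          ring
        · refine ⟨k, by simp [ne_of_gt hzk], ?_⟩
          simp only [Finset.mem_filter, Finset.mem_univ, true_and, not_not]
          rw [hval, if_neg (Ne.symm hjk_ne), if_pos rfl, hδdef, min_eq_right hmin]
          ring
      -- lam' is still weakly decreasing
      have hl' : ∀ a b : Fin n, a ≤ b → lam' b ≤ lam' a := by
        intro a b hab
        by_cases hbj : b = j
        · subst hbj
          by_cases haj : a = j
          · exact le_of_eq (by rw [haj])
          · have haltj : a < j := lt_of_le_of_ne hab haj
            have hak : a ≠ k := ne_of_lt (lt_trans haltj hjk)
            rw [hval a, hval j, if_pos rfl, if_neg haj, if_neg hak]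
            have := hl a j (le_of_lt haltj)
            linarith
        · by_cases hbk : b = k
          · subst hbk
            by_cases haj : a = j
            · rw [hval k, hval a, if_pos haj, if_neg (Ne.symm hjk_ne), if_pos rfl]
              linarith
            · by_cases hak : a = k
              · exact le_of_eq (by rw [hak])
              · have haltk : a < k := lt_of_le_of_ne hab hak
                rw [hval k, hval a, if_neg (Ne.symm hjk_ne), if_pos rfl,
                  if_neg haj, if_neg hak]
                rcases lt_or_ge j a with h | h
                · have hmid := heq_mid a h haltk
                  have := hz a k (le_of_lt haltk)
                  linarith
                · have := hl a j h
                  linarith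
          · -- b not in {j, k} : lam' b = lam b
            rw [hval b, if_neg hbj, if_neg hbk]
            by_cases haj : a = j
            · subst haj
              rw [hval j, if_pos rfl]
              have hjb : j < b := lt_of_le_of_ne hab (fun h => hbj h.symm)
              rcases lt_or_ge b k with h | h
              · have hmid := heq_mid b hjb h
                have := hz j b (le_of_lt hjb)
                linarith
              · have hkb : k < b := lt_of_le_of_ne h (fun h' => hbk h'.symm)
                have := hl k b (le_of_lt hkb)
                linarith
            · by_cases hak : a = k
              · subst hak
                rw [hval k, if_neg (Ne.symm hjk_ne), if_pos rfl]
                have hkb : k < b := lt_of_le_of_ne hab (fun h => hbk h.symm)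
                have := hl k b (le_of_lt hkb)
                linarith
              · rw [hval a, if_neg haj, if_neg hak]
                exact hl a b hab
      -- prefix sums of lam'
      have hpsum' : ∀ p : ℕ, pSum lam' p = pSum lam p
          + (if (k : ℕ) < p then δ else 0) - (if (j : ℕ) < p then δ else 0) := by
        intro p
        have hexp : pSum lam' p = (∑ i ∈ Finset.univ.filter (fun i : Fin n => (i : ℕ) < p), lam i)
            + (∑ i ∈ Finset.univ.filter (fun i : Fin n => (i : ℕ) < p), if i = k then δ else 0)
            - (∑ i ∈ Finset.univ.filter (fun i : Fin n => (i : ℕ) < p), if i = j then δ else 0) := by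
          rw [pSum, ← Finset.sum_add_distrib, ← Finset.sum_sub_distrib]
        rw [hexp, Finset.sum_ite_eq' _ k (fun _ => δ), Finset.sum_ite_eq' _ j (fun _ => δ),
          pSum]
        simp
      have hpre' : ∀ p : ℕ, pSum z p ≤ pSum lam' p := by
        intro p
        rw [hpsum' p]
        by_cases hknp : (k : ℕ) < p
        · have hjnp : (j : ℕ) < p := lt_trans hjk hknp
          rw [if_pos hknp, if_pos hjnp]
          linarith [hpre p]
        · by_cases hjnp : (j : ℕ) < p
          · rw [if_neg hknp, if_pos hjnp]
            have hple : p ≤ (k : ℕ) := not_lt.mp hknp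
            have hdec : ∀ f : Fin n → ℝ, pSum f p = pSum f ((j : ℕ) + 1)
                + ∑ i ∈ Finset.univ.filter
                    (fun i : Fin n => (j : ℕ) < (i : ℕ) ∧ (i : ℕ) < p), f i := by
              intro f
              rw [pSum, pSum, ← Finset.sum_filter_add_sum_filter_not
                (Finset.univ.filter (fun i : Fin n => (i : ℕ) < p))
                (fun i => (i : ℕ) < (j : ℕ) + 1)]
              congr 1
              · congr 1
                ext i
                simp only [Finset.mem_filter, Finset.mem_univ, true_and]
                omega
              · congr 1
                ext i
                simp only [Finset.mem_filter, Finset.mem_univ, true_and]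
                omega
            have hmid_eq : ∑ i ∈ Finset.univ.filter
                  (fun i : Fin n => (j : ℕ) < (i : ℕ) ∧ (i : ℕ) < p), z i
                = ∑ i ∈ Finset.univ.filter
                  (fun i : Fin n => (j : ℕ) < (i : ℕ) ∧ (i : ℕ) < p), lam i := by
              refine Finset.sum_congr rfl (fun i hi => ?_)
              simp only [Finset.mem_filter, Finset.mem_univ, true_and] at hi
              exact heq_mid i (Fin.lt_def.mpr hi.1) (Fin.lt_def.mpr (lt_of_lt_of_le hi.2 hple))
            have h1 := hpre (j : ℕ)
            rw [hdec z, hdec lam, pSum_succ z j, pSum_succ lam j, hmid_eq]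
            linarith
          · rw [if_neg hknp, if_neg hjnp]
            linarith [hpre p]
      -- total sums agree
      have hsum' : ∑ i, z i = ∑ i, lam' i := by
        have hexp : ∑ i, lam' i = (∑ i, lam i)
            + (∑ i : Fin n, if i = k then δ else 0)
            - (∑ i : Fin n, if i = j then δ else 0) := by
          rw [← Finset.sum_add_distrib, ← Finset.sum_sub_distrib]
        rw [hexp, Finset.sum_ite_eq' _ k (fun _ => δ), Finset.sum_ite_eq' _ j (fun _ => δ)]
        simp [hsum]
      exact convexHull_min hincl (convex_convexHull ℝ _)
        (IH _ hltcard lam' rfl hl' hpre' hsum')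

lemma card_filter_lt (n p : ℕ) :
    (Finset.univ.filter (fun i : Fin n => (i : ℕ) < p)).card = min p n := by
  rcases le_or_gt n p with h | h
  · have heq : Finset.univ.filter (fun i : Fin n => (i : ℕ) < p) = Finset.univ := by
      ext i
      simp [lt_of_lt_of_le i.isLt h]
    rw [heq, Finset.card_univ, Fintype.card_fin, min_eq_right h]
  · have heq : Finset.univ.filter (fun i : Fin n => (i : ℕ) < p)
        = Finset.Iio (⟨p, h⟩ : Fin n) := by
      ext i
      simp [Fin.lt_def]
    rw [heq, Fin.card_Iio, min_eq_left (le_of_lt h)]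

lemma hull_of_subset_sums (n : ℕ) (lam z : Fin n → ℝ)
    (hl : ∀ i j : Fin n, i ≤ j → lam j ≤ lam i)
    (hsub : ∀ S : Finset (Fin n), ∑ i ∈ S, z i ≤ pSum lam S.card)
    (hsum : ∑ i, z i = ∑ i, lam i) :
    z ∈ convexHull ℝ {v : Fin n → ℝ | ∃ σ : Equiv.Perm (Fin n), v = lam ∘ σ} := by
  set σ := Tuple.sort (fun i => -z i) with hσdef
  have hmono := Tuple.monotone_sort (fun i => -z i)
  have hzs : ∀ i j : Fin n, i ≤ j → (z ∘ σ) j ≤ (z ∘ σ) i := by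
    intro i j hij
    have h := hmono hij
    simp only [Function.comp_apply, neg_le_neg_iff] at h ⊢
    linarith [h]
  have hpre : ∀ p : ℕ, pSum (z ∘ σ) p ≤ pSum lam p := by
    intro p
    set F := Finset.univ.filter (fun i : Fin n => (i : ℕ) < p) with hF
    have hinj : Set.InjOn σ F := fun a _ b _ hab => σ.injective hab
    have himg : ∑ i ∈ F.image σ, z i = ∑ i ∈ F, z (σ i) := Finset.sum_image hinj
    have hps : pSum lam ((F.image σ).card) = pSum lam p := by
      rw [Finset.card_image_of_injOn hinj]
      have hc : F.card = min p n := by rw [hF]; exact card_filter_lt n p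
      rw [hc, pSum, pSum]
      congr 1
      ext i
      simp only [Finset.mem_filter, Finset.mem_univ, true_and]
      have := i.isLt
      omega
    calc pSum (z ∘ σ) p = ∑ i ∈ F.image σ, z i := himg.symm
      _ ≤ pSum lam ((F.image σ).card) := hsub _
      _ = pSum lam p := hps
  have hsum' : ∑ i, (z ∘ σ) i = ∑ i, lam i := by
    rw [← hsum]
    exact Equiv.sum_comp σ z
  have hmem := hlp_core n (z ∘ σ) hzs _ lam rfl hl hpre hsum'
  -- transport back along σ⁻¹
  set T : (Fin n → ℝ) →ₗ[ℝ] (Fin n → ℝ) := LinearMap.funLeft ℝ ℝ ⇑σ⁻¹ with hT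
  have himg2 : T (z ∘ σ) = z := by
    funext a
    simp only [hT, LinearMap.funLeft_apply, Function.comp_apply]
    exact congrArg z (Equiv.apply_symm_apply σ a)
  have hTmem : T (z ∘ σ) ∈ T '' (convexHull ℝ
      {v : Fin n → ℝ | ∃ τ : Equiv.Perm (Fin n), v = lam ∘ τ}) :=
    Set.mem_image_of_mem _ hmem
  rw [T.image_convexHull] at hTmem
  rw [himg2] at hTmem
  refine convexHull_mono ?_ hTmem
  rintro v ⟨w, ⟨τ, rfl⟩, rfl⟩
  exact ⟨σ⁻¹.trans τ, rfl⟩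



lemma GZX_diag {n : ℕ} (lam : Fin n → ℝ) (x : GZIdx n → ℝ) (t : ℕ) (h : t < n) :
    GZX lam x (t + 1) (t + 1) = lam ⟨t, h⟩ := by
  rw [GZX, dif_pos ⟨by omega, le_rfl, by omega⟩, dif_neg (lt_irrefl _)]
  congr 1

lemma pSum_eq_range {n : ℕ} (f : Fin n → ℝ) (g : ℕ → ℝ)
    (hg : ∀ t (h : t < n), g t = f ⟨t, h⟩) :
    ∀ c, c ≤ n → ∑ t ∈ Finset.range c, g t = pSum f c := by
  intro c
  induction c with
  | zero =>
    intro _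
    rw [pSum]
    simp
  | succ c ih =>
    intro hc
    have hcn : c < n := hc
    have h2 := pSum_succ f ⟨c, hcn⟩
    simp only [Fin.val_mk] at h2
    rw [Finset.sum_range_succ, ih (le_of_lt hcn), hg c hcn, h2]

lemma pSum_all {n : ℕ} (f : Fin n → ℝ) : pSum f n = ∑ i, f i := by
  rw [pSum]
  congr 1
  ext i
  simp [i.isLt]

lemma Yd_zero_eq (n : ℕ) (P : ℕ → ℕ → ℝ) :
    Yd P n 0 = ∑ t ∈ Finset.range n, P (t + 1) (t + 1) := by
  rw [Yd]
  have h : Finset.Icc 1 (n - 0) = Finset.Ico 1 (n + 1) := by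
    rw [Finset.Ico_add_one_right_eq_Icc]
    norm_num
  rw [h, Finset.sum_Ico_eq_sum_range]
  refine Finset.sum_congr (by norm_num) (fun t _ => ?_)
  show P (1 + t) (1 + t + 0) = P (t + 1) (t + 1)
  rw [Nat.add_comm 1 t]

/-- For every point `x` of the Gelfand-Zetlin polytope `GZ(λ)` (weakly decreasing
`λ ≥ 0`), the vector `Φ(x)` lies in the weighted permutohedron `Perm(λ)`. -/
theorem stmt19 (m : ℕ) (lam : Fin (m + 1) → ℝ)
    (hdec : ∀ i j : Fin (m + 1), i ≤ j → lam j ≤ lam i) (h0 : ∀ i, 0 ≤ lam i)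
    (x : GZIdx (m + 1) → ℝ) (hx : x ∈ GZpoly lam) :
    Phi lam x ∈ PermHull (m + 1) lam := by
  set P : ℕ → ℕ → ℝ := GZX lam x with hPdef
  have hGZy : ∀ j, GZy lam x j = Yd P (m + 1) j := fun j => rfl
  have hP : ∀ i j : ℕ, 1 ≤ i → i ≤ j → j + 1 ≤ m + 1 →
      P i (j + 1) ≤ P i j ∧ P (i + 1) (j + 1) ≤ P i (j + 1) := hx
  have hdiag : ∀ t (h : t < m + 1), P (t + 1) (t + 1) = lam ⟨t, h⟩ :=
    fun t h => GZX_diag lam x t h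
  -- subset sums
  have hsub : ∀ S : Finset (Fin (m + 1)), ∑ i ∈ S, Phi lam x i ≤ pSum lam S.card := by
    intro S
    set SN := S.image Fin.val with hSN
    have hinj : Set.InjOn Fin.val (S : Set (Fin (m + 1))) :=
      fun a _ b _ h => Fin.val_injective h
    have hcard : SN.card = S.card := Finset.card_image_of_injOn hinj
    have hsubN : SN ⊆ Finset.range (m + 1) := by
      intro t ht
      obtain ⟨i, _, rfl⟩ := Finset.mem_image.mp ht
      exact Finset.mem_range.mpr i.isLt
    have h1 := lemA (m + 1) P hP SN hsubN
    have h2 : ∑ k ∈ SN, (Yd P (m + 1) k - Yd P (m + 1) (k + 1)) = ∑ i ∈ S, Phi lam x i := by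
      rw [hSN, Finset.sum_image hinj]
      exact Finset.sum_congr rfl (fun i _ => rfl)
    have h3 : ∑ t ∈ Finset.range SN.card, P (t + 1) (t + 1) = pSum lam SN.card :=
      pSum_eq_range lam _ hdiag SN.card (by simpa using Finset.card_le_card hsubN)
    rw [h2, h3, hcard] at h1
    exact h1
  -- total sum
  have hsum : ∑ i, Phi lam x i = ∑ i, lam i := by
    have h1 : ∑ i : Fin (m + 1), Phi lam x i
        = ∑ t ∈ Finset.range (m + 1), (Yd P (m + 1) t - Yd P (m + 1) (t + 1)) := by
      exact Fin.sum_univ_eq_sum_range (fun t => Yd P (m + 1) t - Yd P (m + 1) (t + 1)) (m + 1)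
    have h2 := Finset.sum_range_sub' (fun t => Yd P (m + 1) t) (m + 1)
    have h3 : Yd P (m + 1) (m + 1) = 0 := by
      rw [Yd]
      simp
    have h4 : Yd P (m + 1) 0 = ∑ i, lam i := by
      rw [Yd_zero_eq, pSum_eq_range lam _ hdiag (m + 1) le_rfl, pSum_all]
    rw [h1, h2, h3, h4]
    ring
  exact hull_of_subset_sums (m + 1) lam (Phi lam x) hdec hsub hsum
end
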